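/- arXiv:1008.2928 — 10 statements merged into one kernel-verified Lean document; each statement's English description precedes it below -/
import Mathlib

section
/- Let q = (q_i) and r = (r_i) be two probability distributions over the positive integers with finite support, such that q is nonincreasing (q_i ≥ q_{i+1} for all i ≥ 1). If q is dominated by r, i.e., Σ_{i=1}^ℓ q_i ≤ Σ_{i=1}^ℓ r_i for all ℓ, then the Shannon entropy of q is at least the Shannon entropy of r. -/
open scoped BigOperators

/-!
Since `q` is nonincreasing with finite support, it is positive exactly on an initial segment
`{0, …, m - 1}`. Domination at `ℓ = m` leaves no mass of `r` beyond `m`, so everything reduces to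
sums over `range m`. There, summation by parts against the nonincreasing weights `log qᵢ` turns
domination into `∑ qᵢ log qᵢ ≤ ∑ rᵢ log qᵢ`, and Gibbs' inequality `∑ rᵢ log qᵢ ≤ ∑ rᵢ log rᵢ`
finishes the argument.
-/

open Finset Function Real

theorem Antitone.exists_pos_and_eq_zero_of_support_finite {α : Type*} [LinearOrder α] [Zero α]
    {q : ℕ → α} (hq : Antitone q) (hfin : (support q).Finite) :
    ∃ m, (∀ i < m, 0 < q i) ∧ ∀ i, m ≤ i → q i = 0 := by
  classical
  obtain ⟨N, hN⟩ := hfin.bddAbove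
  have hzero : ∀ j, N < j → q j = 0 := fun j hj =>
    notMem_support.1 fun h => (hN h).not_gt hj
  have hex : ∃ i, q i ≤ 0 := ⟨N + 1, (hzero _ N.lt_succ_self).le⟩
  refine ⟨Nat.find hex, fun i hi => lt_of_not_ge (Nat.find_min hex hi), fun i hi => ?_⟩
  refine le_antisymm ((hq hi).trans (Nat.find_spec hex)) ?_
  rw [← hzero (i + N + 1) (by omega)]
  exact hq (by omega)

theorem support_subset_of_finsum_le_sum {α M : Type*} [AddCommMonoid M] [PartialOrder M]
    [IsOrderedCancelAddMonoid M] {f : α → M} (hf : ∀ i, 0 ≤ f i) (hfin : (support f).Finite)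
    {s : Finset α} (h : ∑ᶠ i, f i ≤ ∑ i ∈ s, f i) : support f ⊆ s := by
  classical
  intro i hi
  by_contra his
  have hle : ∑ j ∈ insert i s, f j ≤ ∑ᶠ j, f j := by
    rw [finsum_eq_sum_of_support_subset f (s := insert i s ∪ hfin.toFinset)
      fun j hj => mem_coe.2 (mem_union_right _ (hfin.mem_toFinset.2 hj))]
    exact sum_le_sum_of_subset_of_nonneg subset_union_left fun j _ _ => hf j
  rw [sum_insert his] at hle
  exact hi (le_antisymm (add_le_iff_nonpos_left.1 (hle.trans h)) (hf i))

theorem sum_range_mul_le_of_partialSums_le {n : ℕ} {a x y : ℕ → ℝ}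
    (ha : ∀ i, i + 1 < n → a (i + 1) ≤ a i)
    (hxy : ∀ ℓ < n, ∑ i ∈ range ℓ, x i ≤ ∑ i ∈ range ℓ, y i)
    (htot : ∑ i ∈ range n, x i = ∑ i ∈ range n, y i) :
    ∑ i ∈ range n, x i * a i ≤ ∑ i ∈ range n, y i * a i := by
  suffices 0 ≤ ∑ i ∈ range n, a i • (y i - x i) by
    simpa [mul_sub, sum_sub_distrib, mul_comm] using this
  rw [sum_range_by_parts, sum_sub_distrib, htot, sub_self, smul_zero, zero_sub, neg_nonneg]
  refine sum_nonpos fun i hi => ?_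
  have hi : i + 1 < n := by have := mem_range.1 hi; omega
  rw [sum_sub_distrib, smul_eq_mul]
  exact mul_nonpos_of_nonpos_of_nonneg (sub_nonpos.2 (ha i hi)) (sub_nonneg.2 (hxy _ hi))

theorem mul_log_sub_mul_log_le {p q : ℝ} (hp : 0 ≤ p) (hq : 0 < q) :
    p * log q - p * log p ≤ q - p := by
  rcases hp.eq_or_lt with rfl | hp
  · simpa using hq.le
  have h := log_le_sub_one_of_pos (div_pos hq hp)
  rw [log_div hq.ne' hp.ne'] at h
  have := mul_le_mul_of_nonneg_left h hp.le
  rwa [mul_sub, mul_sub, mul_div_cancel₀ _ hp.ne', mul_one] at this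

theorem sum_mul_log_le_sum_mul_log {ι : Type*} {s : Finset ι} {p q : ι → ℝ}
    (hp : ∀ i ∈ s, 0 ≤ p i) (hq : ∀ i ∈ s, 0 < q i) (hpq : ∑ i ∈ s, q i ≤ ∑ i ∈ s, p i) :
    ∑ i ∈ s, p i * log (q i) ≤ ∑ i ∈ s, p i * log (p i) := by
  have h := sum_le_sum fun i hi => mul_log_sub_mul_log_le (hp i hi) (hq i hi)
  simp only [sum_sub_distrib] at h
  linarith

theorem sum_range_mul_log_le_of_partialSums_le {n : ℕ} {q r : ℕ → ℝ}
    (hq : ∀ i < n, 0 < q i) (hr : ∀ i < n, 0 ≤ r i) (hmono : ∀ i, i + 1 < n → q (i + 1) ≤ q i)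
    (hdom : ∀ ℓ < n, ∑ i ∈ range ℓ, q i ≤ ∑ i ∈ range ℓ, r i)
    (htot : ∑ i ∈ range n, q i = ∑ i ∈ range n, r i) :
    ∑ i ∈ range n, q i * log (q i) ≤ ∑ i ∈ range n, r i * log (r i) :=
  calc ∑ i ∈ range n, q i * log (q i)
      ≤ ∑ i ∈ range n, r i * log (q i) :=
        sum_range_mul_le_of_partialSums_le
          (fun i hi => log_le_log (hq _ hi) (hmono i hi)) hdom htot
    _ ≤ ∑ i ∈ range n, r i * log (r i) :=
        sum_mul_log_le_sum_mul_log (fun i hi => hr i (mem_range.1 hi))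
          (fun i hi => hq i (mem_range.1 hi)) htot.le

theorem stmt_0_general (q r : ℕ → ℝ)
    (hr0 : ∀ i, 0 ≤ r i)
    (hqsum : ∑ᶠ i, q i = 1) (hrsum : ∑ᶠ i, r i = 1)
    (hmono : ∀ i, q (i + 1) ≤ q i)
    (hdom : ∀ ℓ : ℕ, ∑ i ∈ Finset.range ℓ, q i ≤ ∑ i ∈ Finset.range ℓ, r i) :
    -∑ᶠ i, r i * Real.logb 2 (r i) ≤ -∑ᶠ i, q i * Real.logb 2 (q i) := by
  obtain ⟨m, hqpos, hqzero⟩ :=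
    (antitone_nat_of_succ_le hmono).exists_pos_and_eq_zero_of_support_finite
      (hasFiniteSupport_of_finsum_eq_one hqsum)
  have hsuppq : support q ⊆ range m := fun i hi =>
    mem_range.2 (lt_of_not_ge fun h => hi (hqzero i h))
  have hq1 : ∑ i ∈ range m, q i = 1 := by rw [← finsum_eq_sum_of_support_subset q hsuppq, hqsum]
  have hsuppr : support r ⊆ range m := support_subset_of_finsum_le_sum hr0
    (hasFiniteSupport_of_finsum_eq_one hrsum) (hrsum.trans_le (hq1 ▸ hdom m))
  have hr1 : ∑ i ∈ range m, r i = 1 := by rw [← finsum_eq_sum_of_support_subset r hsuppr, hrsum]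
  have key := sum_range_mul_log_le_of_partialSums_le hqpos (fun i _ => hr0 i)
    (fun i _ => hmono i) (fun ℓ _ => hdom ℓ) (hq1.trans hr1.symm)
  rw [finsum_eq_sum_of_support_subset _ ((support_mul_subset_left _ _).trans hsuppq),
    finsum_eq_sum_of_support_subset _ ((support_mul_subset_left _ _).trans hsuppr)]
  simp only [logb, ← mul_div_assoc, ← sum_div]
  exact neg_le_neg (div_le_div_of_nonneg_right key (log_nonneg one_le_two))

/-- Domination lemma (inequality part): if `q` is a nonincreasing probability
distribution with finite support dominated by `r`, then `H(q) ≥ H(r)`. -/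
theorem stmt_0 (q r : ℕ → ℝ)
    (hq0 : ∀ i, 0 ≤ q i) (hr0 : ∀ i, 0 ≤ r i)
    (hqfin : (Function.support q).Finite) (hrfin : (Function.support r).Finite)
    (hqsum : ∑ᶠ i, q i = 1) (hrsum : ∑ᶠ i, r i = 1)
    (hmono : ∀ i, q (i + 1) ≤ q i)
    (hdom : ∀ ℓ : ℕ, ∑ i ∈ Finset.range ℓ, q i ≤ ∑ i ∈ Finset.range ℓ, r i) :
    -∑ᶠ i, r i * Real.logb 2 (r i) ≤ -∑ᶠ i, q i * Real.logb 2 (q i) :=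
  stmt_0_general q r hr0 hqsum hrsum hmono hdom
end

section
/- Let q = (q_i) and r = (r_i) be two probability distributions over the positive integers with finite support, such that q is nonincreasing. If q is dominated by r and the entropy of q equals the entropy of r, then q = r. -/
/-!
Since `q` is nonincreasing with finite support, it is positive exactly on an initial
segment `range N`, and domination together with `∑ r = 1` forces `r` to vanish beyond `N` as well.
On `range N` the weights `log qᵢ` are nonincreasing while the partial sums of `r - q` are
nonnegative and total `0`, so summation by parts gives `∑ qᵢ log qᵢ ≤ ∑ rᵢ log qᵢ`.
With equal entropies this says the Kullback–Leibler divergence `∑ rᵢ log (rᵢ / qᵢ)` is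
`≤ 0`, and the equality case of Gibbs' inequality gives `r = q`.
-/

open Finset Real InformationTheory

lemma exists_pos_iff_lt_of_antitone {q : ℕ → ℝ} (hq0 : ∀ i, 0 ≤ q i)
    (hfin : (Function.support q).Finite) (hanti : Antitone q) :
    ∃ N, ∀ i, 0 < q i ↔ i < N := by
  have hzero : ∃ n, q n = 0 := by
    by_contra! h
    exact Set.infinite_univ (hfin.subset fun i _ => h i)
  refine ⟨Nat.find hzero, fun i =>
    ⟨fun hi => ?_, fun hi => (hq0 i).lt_of_ne' (Nat.find_min hzero hi)⟩⟩
  by_contra! hle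
  exact hi.ne' (le_antisymm (Nat.find_spec hzero ▸ hanti hle) (hq0 i))

lemma support_subset_of_finsum_le_sum_s1 {α : Type*} {f : α → ℝ} {s : Finset α}
    (hf0 : ∀ i, 0 ≤ f i) (hfin : (Function.support f).Finite)
    (hle : ∑ᶠ i, f i ≤ ∑ i ∈ s, f i) : Function.support f ⊆ s := by
  classical
  intro i hi
  by_contra his
  have hsub : Function.support f ⊆ ↑(insert i s ∪ hfin.toFinset) := fun j hj => by simp [hj]
  have hins : ∑ j ∈ insert i s, f j ≤ ∑ᶠ j, f j := by
    rw [finsum_eq_sum_of_support_subset f hsub]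
    exact sum_le_sum_of_subset_of_nonneg subset_union_left fun j _ _ => hf0 j
  rw [sum_insert his] at hins
  exact hi (le_antisymm (by linarith) (hf0 i))

lemma sum_range_mul_nonneg_of_antitoneOn {d w : ℕ → ℝ} {n : ℕ}
    (hw : AntitoneOn w (Set.Iio n))
    (hpartial : ∀ k < n, 0 ≤ ∑ i ∈ range k, d i) (htotal : ∑ i ∈ range n, d i = 0) :
    0 ≤ ∑ i ∈ range n, w i * d i := by
  have hparts := sum_range_by_parts w d n
  simp only [smul_eq_mul] at hparts
  rw [hparts, htotal, mul_zero, zero_sub, neg_nonneg]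
  refine sum_nonpos fun i hi => mul_nonpos_of_nonpos_of_nonneg ?_ (hpartial _ ?_)
  · rw [mem_range] at hi
    exact sub_nonpos.2 (hw (Set.mem_Iio.2 (by omega)) (Set.mem_Iio.2 (by omega)) (by omega))
  · rw [mem_range] at hi
    omega

lemma mul_klFun_div (p : ℝ) {q : ℝ} (hq : 0 < q) :
    q * klFun (p / q) = p * log p - p * log q + q - p := by
  rcases eq_or_ne p 0 with rfl | hp
  · simp [klFun]
  · rw [klFun, log_div hp hq.ne']
    field_simp

lemma eq_of_sum_mul_log_le_sum_mul_log {ι : Type*} {s : Finset ι} {p q : ι → ℝ}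
    (hq : ∀ i ∈ s, 0 < q i) (hp : ∀ i ∈ s, 0 ≤ p i)
    (hsum : ∑ i ∈ s, p i = ∑ i ∈ s, q i)
    (hle : ∑ i ∈ s, p i * log (p i) ≤ ∑ i ∈ s, p i * log (q i)) :
    ∀ i ∈ s, p i = q i := by
  have hkl_nonneg : ∀ i ∈ s, 0 ≤ q i * klFun (p i / q i) := fun i hi =>
    mul_nonneg (hq i hi).le (klFun_nonneg (div_nonneg (hp i hi) (hq i hi).le))
  have hkl_sum : ∑ i ∈ s, q i * klFun (p i / q i)
      = ∑ i ∈ s, p i * log (p i) - ∑ i ∈ s, p i * log (q i) := by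
    rw [sum_congr rfl fun i hi => mul_klFun_div (p i) (hq i hi)]
    simp only [sum_add_distrib, sum_sub_distrib]
    linarith
  have hkl_zero := (sum_eq_zero_iff_of_nonneg hkl_nonneg).1
    (le_antisymm (by linarith) (sum_nonneg hkl_nonneg))
  intro i hi
  have hdiv := (klFun_eq_zero_iff (div_nonneg (hp i hi) (hq i hi).le)).1
    ((mul_eq_zero.1 (hkl_zero i hi)).resolve_left (hq i hi).ne')
  exact (div_eq_one_iff_eq (hq i hi).ne').1 hdiv

lemma finsum_mul_logb_eq_sum_mul_log_div {α : Type*} {f : α → ℝ} {s : Finset α}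
    (hs : Function.support f ⊆ s) (b : ℝ) :
    ∑ᶠ i, f i * logb b (f i) = (∑ i ∈ s, f i * log (f i)) / log b := by
  rw [finsum_eq_sum_of_support_subset _ ((Function.support_mul_subset_left _ _).trans hs),
    sum_div]
  simp only [logb, mul_div_assoc]

/-- Domination lemma (equality part): if moreover the entropies coincide, then `q = r`. -/
theorem stmt_1 (q r : ℕ → ℝ)
    (hq0 : ∀ i, 0 ≤ q i) (hr0 : ∀ i, 0 ≤ r i)
    (hqfin : (Function.support q).Finite) (hrfin : (Function.support r).Finite)
    (hqsum : ∑ᶠ i, q i = 1) (hrsum : ∑ᶠ i, r i = 1)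
    (hmono : ∀ i, q (i + 1) ≤ q i)
    (hdom : ∀ ℓ : ℕ, ∑ i ∈ Finset.range ℓ, q i ≤ ∑ i ∈ Finset.range ℓ, r i)
    (hent : -∑ᶠ i, q i * Real.logb 2 (q i) = -∑ᶠ i, r i * Real.logb 2 (r i)) :
    q = r := by
  obtain ⟨N, hN⟩ := exists_pos_iff_lt_of_antitone hq0 hqfin (antitone_nat_of_succ_le hmono)
  have hqsupp : Function.support q ⊆ ↑(range N) := fun i hi => by
    simpa [← hN] using (hq0 i).lt_of_ne' hi
  have hQ : ∑ i ∈ range N, q i = 1 := hqsum ▸ (finsum_eq_sum_of_support_subset q hqsupp).symm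
  have hrsupp : Function.support r ⊆ ↑(range N) :=
    support_subset_of_finsum_le_sum_s1 hr0 hrfin (hrsum ▸ hQ ▸ hdom N)
  have hR : ∑ i ∈ range N, r i = 1 := hrsum ▸ (finsum_eq_sum_of_support_subset r hrsupp).symm
  have hentropy : ∑ i ∈ range N, r i * log (r i) = ∑ i ∈ range N, q i * log (q i) := by
    rw [neg_inj, finsum_mul_logb_eq_sum_mul_log_div hqsupp,
      finsum_mul_logb_eq_sum_mul_log_div hrsupp] at hent
    exact ((div_left_inj' (log_pos one_lt_two).ne').1 hent).symm
  have hcross : ∑ i ∈ range N, q i * log (q i) ≤ ∑ i ∈ range N, r i * log (q i) := by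
    have hlog_anti : AntitoneOn (fun i => log (q i)) (Set.Iio N) := fun i _ j hj hij =>
      log_le_log ((hN j).2 hj) (antitone_nat_of_succ_le hmono hij)
    have := sum_range_mul_nonneg_of_antitoneOn (d := fun i => r i - q i) hlog_anti
      (fun k _ => by simpa [sum_sub_distrib] using hdom k) (by simp [sum_sub_distrib, hQ, hR])
    simpa only [mul_comm (log (q _)), sub_mul, sum_sub_distrib, sub_nonneg] using this
  have heq := eq_of_sum_mul_log_le_sum_mul_log (fun i hi => (hN i).2 (mem_range.1 hi))
    (fun i _ => hr0 i) (hR.trans hQ.symm) (hentropy ▸ hcross)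
  funext i
  by_cases hi : i < N
  · exact (heq i (mem_range.2 hi)).symm
  · rw [Function.notMem_support.1 fun h => hi (mem_range.1 (hqsupp h)),
      Function.notMem_support.1 fun h => hi (mem_range.1 (hrsupp h))]
end

section
/- Let a_1, ..., a_ℓ be nonnegative integers summing to s. Then the product over i = 1,...,ℓ of (s - Σ_{j<i} a_j)^{a_i} is at least s! (with the convention 0^0 = 1). -/
open scoped BigOperators

lemma aux_range (l : ℕ) : ∀ (a : ℕ → ℕ) (s : ℕ), s = ∑ i ∈ Finset.range l, a i →
    Nat.factorial s ≤ ∏ i ∈ Finset.range l, (s - ∑ j ∈ Finset.range i, a j) ^ a i := by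
  induction l with
  | zero => intro a s hs; simp at hs; simp [hs]
  | succ n ih =>
    intro a s hs
    rw [Finset.sum_range_succ'] at hs
    set t := ∑ i ∈ Finset.range n, a (i + 1) with ht
    have hts : t + a 0 = s := hs.symm
    have h0 : a 0 ≤ s := by omega
    have key : ∀ i, s - ∑ j ∈ Finset.range (i + 1), a j = t - ∑ j ∈ Finset.range i, a (j + 1) := by
      intro i
      rw [Finset.sum_range_succ']
      omega
    rw [Finset.prod_range_succ']
    have hstep : ∏ i ∈ Finset.range n, (s - ∑ j ∈ Finset.range (i+1), a j) ^ a (i+1)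
        = ∏ i ∈ Finset.range n, (t - ∑ j ∈ Finset.range i, a (j+1)) ^ a (i+1) := by
      apply Finset.prod_congr rfl
      intro i _
      rw [key]
    rw [hstep]
    simp only [Finset.range_zero, Finset.sum_empty, Nat.sub_zero]
    have h1 : Nat.factorial t ≤ ∏ i ∈ Finset.range n, (t - ∑ j ∈ Finset.range i, a (j+1)) ^ a (i+1) :=
      ih _ _ ht
    calc Nat.factorial s = Nat.factorial (s - a 0) * s.descFactorial (a 0) :=
          (Nat.factorial_mul_descFactorial h0).symm
      _ ≤ Nat.factorial t * s ^ a 0 := by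
          have : s - a 0 = t := by omega
          rw [this]
          exact Nat.mul_le_mul_left _ (Nat.descFactorial_le_pow s _)
      _ ≤ (∏ i ∈ Finset.range n, (t - ∑ j ∈ Finset.range i, a (j+1)) ^ a (i+1)) * s ^ a 0 :=
          Nat.mul_le_mul_right _ h1

/-- If nonnegative integers `a 0, …, a (l-1)` sum to `s`, then
`∏ i, (s - ∑_{j<i} a j) ^ (a i) ≥ s!` (with `0^0 = 1`). -/
theorem stmt_2 (l : ℕ) (a : Fin l → ℕ) (s : ℕ) (hs : s = ∑ i, a i) :
    Nat.factorial s ≤ ∏ i : Fin l, (s - ∑ j ∈ Finset.Iio i, a j) ^ a i := by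
  set b : ℕ → ℕ := fun i => if h : i < l then a ⟨i, h⟩ else 0 with hb
  have hba : ∀ i : Fin l, b i = a i := by
    intro i; simp [hb, i.isLt]
  have hsum : ∀ i : Fin l, ∑ j ∈ Finset.Iio i, a j = ∑ j ∈ Finset.range i.val, b j := by
    intro i
    rw [← Nat.Iio_eq_range, ← Fin.map_valEmbedding_Iio, Finset.sum_map]
    exact Finset.sum_congr rfl fun j _ => (hba j).symm
  have hs' : s = ∑ i ∈ Finset.range l, b i := by
    rw [hs, ← Fin.sum_univ_eq_sum_range]
    exact Finset.sum_congr rfl fun i _ => (hba i).symm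
  have := aux_range l b s hs'
  rw [← Fin.prod_univ_eq_prod_range] at this
  refine this.trans_eq (Finset.prod_congr rfl fun i _ => ?_)
  rw [hsum i, hba i]
end

section
/- Let U be a finite nonempty ground set of size n, and let S_1, ..., S_ℓ be the (disjoint, nonempty) sets of newly covered elements in the successive iterations of the greedy algorithm for set cover; that is, S_1, ..., S_ℓ partition U. Let S ⊆ U be any set such that for each i, |S_i| ≥ |S| - Σ_{j<i} |S ∩ S_j| (the greedy property with respect to S). Define ỹ_v := -(1/n) · log(|S_i|·e/n) for v ∈ S_i. Then Σ_{v ∈ S} ỹ_v ≤ -(|S|/n) · log(|S|/n). -/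
/-! With `a i = |T ∩ S i|` and `r i = ∑_{j ≥ i} a j` (the part of `T` still uncovered before
step `i`), the greedy property says `r i ≤ |S i|`, so each of the `a i` elements of `T ∩ S i`
gets `ỹ ≤ -(1/n) log (r i · e / n)`. It remains to show `∑ a i (ln (r i) + 1) ≥ t ln t` for
`t = |T|`; this telescopes from the tangent-line inequality
`r ln r - b ln b ≤ (r - b)(ln r + 1)` of the convex function `x ln x`, taken at `r = r i`,
`b = r (i + 1)`. -/

open Function Real Finset

theorem Real.mul_log_sub_mul_log_le {b r : ℝ} (hb : 0 ≤ b) (hbr : b ≤ r) :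
    r * log r - b * log b ≤ (r - b) * (log r + 1) := by
  rcases hb.eq_or_lt with rfl | hb
  · simp only [log_zero, mul_zero, sub_zero]
    nlinarith [self_sub_one_le_mul_log (hb.trans hbr)]
  · have hr : 0 < r := hb.trans_le hbr
    have h : b * log (r / b) ≤ r - b := by
      calc b * log (r / b) ≤ b * (r / b - 1) := by
            gcongr; exact log_le_sub_one_of_pos (by positivity)
        _ = r - b := by field_simp
    rw [log_div hr.ne' hb.ne'] at h
    nlinarith

theorem Finset.sum_mul_log_sum_le_sum_mul_log_suffix_add_one {ι : Type*} [LinearOrder ι]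
    (s : Finset ι) (a : ι → ℝ) (ha : ∀ i ∈ s, 0 ≤ a i) :
    (∑ i ∈ s, a i) * log (∑ i ∈ s, a i) ≤
      ∑ i ∈ s, a i * (log (∑ j ∈ s with i ≤ j, a j) + 1) := by
  induction s using Finset.induction_on_min with
  | empty => simp
  | insert m s hm ih =>
    have hms : m ∉ s := fun h => lt_irrefl m (hm m h)
    have hsuffix :
        ∀ i ∈ s, ∑ j ∈ insert m s with i ≤ j, a j = ∑ j ∈ s with i ≤ j, a j := by
      intro i hi
      rw [filter_insert, if_neg (hm i hi).not_ge]
    have hsuffix_min : ∑ j ∈ insert m s with m ≤ j, a j = ∑ j ∈ insert m s, a j := by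
      refine sum_congr (filter_true_of_mem fun j hj => ?_) fun _ _ => rfl
      rcases mem_insert.mp hj with rfl | hj
      exacts [le_rfl, (hm j hj).le]
    have ha_s : ∀ i ∈ s, 0 ≤ a i := fun i hi => ha i (mem_insert_of_mem hi)
    have htangent := mul_log_sub_mul_log_le (sum_nonneg ha_s)
      (le_add_of_nonneg_left (ha m (mem_insert_self m s)))
    rw [add_sub_cancel_right] at htangent
    have hrest : ∑ i ∈ s, a i * (log (∑ j ∈ insert m s with i ≤ j, a j) + 1) =
        ∑ i ∈ s, a i * (log (∑ j ∈ s with i ≤ j, a j) + 1) :=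
      sum_congr rfl fun i hi => by rw [hsuffix i hi]
    rw [sum_insert hms, sum_insert hms, hsuffix_min, hrest, sum_insert hms]
    linarith [ih ha_s]

theorem Real.mul_neg_logb_mul_exp_div_le {a r b n : ℝ} (hn : 0 < n) (ha : 0 ≤ a) (har : a ≤ r)
    (hrb : r ≤ b) :
    a * (-(1 / n) * logb 2 (b * exp 1 / n)) ≤ -(a * (log r + 1) - a * log n) / (n * log 2) := by
  rcases ha.eq_or_lt with rfl | ha
  · simp
  have hr : 0 < r := ha.trans_le har
  have hb : 0 < b := hr.trans_le hrb
  have hlog : log (b * exp 1 / n) = log b + 1 - log n := by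
    rw [log_div (by positivity) hn.ne', log_mul hb.ne' (exp_pos 1).ne', log_exp]
  calc a * (-(1 / n) * logb 2 (b * exp 1 / n))
      = -(a * (log b + 1) - a * log n) / (n * log 2) := by rw [logb, hlog]; ring
    _ ≤ -(a * (log r + 1) - a * log n) / (n * log 2) := by gcongr

theorem Finset.sum_mul_neg_logb_le_of_suffix_le {ι : Type*} [LinearOrder ι] (s : Finset ι)
    (a b : ι → ℝ) {n : ℝ} (hn : 0 < n) (ha : ∀ i ∈ s, 0 ≤ a i)
    (hb : ∀ i ∈ s, ∑ j ∈ s with i ≤ j, a j ≤ b i) :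
    ∑ i ∈ s, a i * (-(1 / n) * logb 2 (b i * exp 1 / n)) ≤
      -((∑ i ∈ s, a i) / n) * logb 2 ((∑ i ∈ s, a i) / n) := by
  set t := ∑ i ∈ s, a i
  have ha_le : ∀ i ∈ s, a i ≤ ∑ j ∈ s with i ≤ j, a j := fun i hi =>
    single_le_sum (fun j hj => ha j (mem_filter.mp hj).1) (mem_filter.mpr ⟨hi, le_rfl⟩)
  have hlog_div : t * log (t / n) = t * log t - t * log n := by
    rcases eq_or_ne t 0 with ht | ht
    · simp [ht]
    · rw [log_div ht hn.ne', mul_sub]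
  calc ∑ i ∈ s, a i * (-(1 / n) * logb 2 (b i * exp 1 / n))
      ≤ ∑ i ∈ s,
          -(a i * (log (∑ j ∈ s with i ≤ j, a j) + 1) - a i * log n) / (n * log 2) :=
        sum_le_sum fun i hi =>
          mul_neg_logb_mul_exp_div_le hn (ha i hi) (ha_le i hi) (hb i hi)
    _ = -(∑ i ∈ s, a i * (log (∑ j ∈ s with i ≤ j, a j) + 1) - t * log n) /
          (n * log 2) := by
        rw [← sum_div, sum_neg_distrib, sum_sub_distrib, ← sum_mul]
    _ ≤ -(t * log t - t * log n) / (n * log 2) := by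
        gcongr
        exact sum_mul_log_sum_le_sum_mul_log_suffix_add_one s a ha
    _ = -(t / n) * logb 2 (t / n) := by
        rw [logb, ← hlog_div]
        field_simp

theorem Finset.sum_eq_sum_sum_inter {ι α M : Type*} [Fintype ι] [DecidableEq α]
    [AddCommMonoid M] (S : ι → Finset α) (hS : Pairwise (Disjoint on S)) (T : Finset α)
    (hT : ∀ v ∈ T, ∃ i, v ∈ S i) (f : α → M) :
    ∑ v ∈ T, f v = ∑ i, ∑ v ∈ T ∩ S i, f v := by
  rw [← sum_biUnion fun i _ j _ hij =>
    (hS hij).mono inter_subset_right inter_subset_right]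
  congr 1
  ext v
  simp only [mem_biUnion, mem_univ, mem_inter, true_and]
  exact ⟨fun hv => (hT v hv).imp fun _ hi => ⟨hv, hi⟩, fun ⟨_, hv, _⟩ => hv⟩

theorem stmt_4_general {V : Type*} [DecidableEq V]
    (n : ℕ) (hn0 : 0 < n)
    (l : ℕ) (S : Fin l → Finset V)
    (hdisj : ∀ i j, i ≠ j → Disjoint (S i) (S j))
    (hpart : ∀ v : V, ∃ i, v ∈ S i)
    (T : Finset V)
    (hgreedy : ∀ i : Fin l,
      (T.card : ℤ) - ∑ j ∈ Finset.Iio i, ((T ∩ S j).card : ℤ) ≤ ((S i).card : ℤ))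
    (y : V → ℝ)
    (hy : ∀ i : Fin l, ∀ v ∈ S i,
      y v = -(1 / n : ℝ) * Real.logb 2 (((S i).card : ℝ) * Real.exp 1 / n)) :
    ∑ v ∈ T, y v ≤ -((T.card : ℝ) / n) * Real.logb 2 ((T.card : ℝ) / n) := by
  set a : Fin l → ℝ := fun i => ((T ∩ S i).card : ℝ)
  have hsplit := sum_eq_sum_sum_inter (M := ℝ) S (fun i j => hdisj i j) T fun v _ => hpart v
  have hcard : (T.card : ℝ) = ∑ i, a i := by
    simpa using hsplit fun _ => (1 : ℝ)
  have hy_sum : ∑ v ∈ T, y v =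
      ∑ i, a i * (-(1 / n : ℝ) * logb 2 (((S i).card : ℝ) * exp 1 / n)) := by
    rw [hsplit]
    refine sum_congr rfl fun i _ => ?_
    rw [sum_congr rfl fun v hv => hy i v (mem_inter.mp hv).2, sum_const, nsmul_eq_mul]
  have hsuffix : ∀ i, ∑ j with i ≤ j, a j ≤ (S i).card := by
    intro i
    have hprefix := sum_filter_add_sum_filter_not univ (· < i) a
    simp only [filter_gt_eq_Iio, not_lt] at hprefix
    have hgreedy_i := (Int.cast_le (R := ℝ)).mpr (hgreedy i)
    push_cast at hgreedy_i
    linarith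
  rw [hy_sum, hcard]
  exact sum_mul_neg_logb_le_of_suffix_le univ a _ (by exact_mod_cast hn0)
    (fun i _ => by positivity) fun i _ => hsuffix i

/-- Dual feasibility step in the dual-fitting analysis of greedy for minimum
entropy set cover: the dual vector `ỹ` satisfies the constraint of every
covered set `T`. -/
theorem stmt_4 {V : Type*} [Fintype V] [DecidableEq V]
    (n : ℕ) (hn : n = Fintype.card V) (hn0 : 0 < n)
    (l : ℕ) (S : Fin l → Finset V)
    (hdisj : ∀ i j, i ≠ j → Disjoint (S i) (S j))
    (hne : ∀ i, (S i).Nonempty)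
    (hpart : ∀ v : V, ∃ i, v ∈ S i)
    (T : Finset V)
    (hgreedy : ∀ i : Fin l,
      (T.card : ℤ) - ∑ j ∈ Finset.Iio i, ((T ∩ S j).card : ℤ) ≤ ((S i).card : ℤ))
    (y : V → ℝ)
    (hy : ∀ i : Fin l, ∀ v ∈ S i,
      y v = -(1 / n : ℝ) * Real.logb 2 (((S i).card : ℝ) * Real.exp 1 / n)) :
    ∑ v ∈ T, y v ≤ -((T.card : ℝ) / n) * Real.logb 2 ((T.card : ℝ) / n) :=
  stmt_4_general n hn0 l S hdisj hpart T hgreedy y hy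
end

section
/- Let U be a finite ground set of size n covered by a collection 𝒮 of subsets. Let g be the entropy of the greedy solution (iteratively assigning uncovered elements to a set covering the maximum number of uncovered elements), and let OPT be the minimum entropy over all assignments φ : U → 𝒮 with x ∈ φ(x). Then g ≤ OPT + log₂ e. -/
/-!
Index each element by the greedy step that covers it. If an element `v` lies in the block
`φ⁻¹(T)`, then every later element of that block is still uncovered when `v` is covered, so
greedy's set at that step is at least as large as the number of such elements. Ordering each
block by greedy step and multiplying gives `∏_T b_T! ≤ ∏_i a_i^a_i` with `a_i = |S_i|` and
`b_T = |φ⁻¹(T)|`. Taking logarithms, `m log m - m log e ≤ log m!` turns this into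
`∑_T b_T log b_T ≤ ∑_i a_i log a_i + n log e`, and dividing by `n` gives the claimed bound.
-/

open Finset Real

section

-- Closed before `stmt_5`, where the scoped totient notation `φ` would capture the binder `φ`.
open scoped Nat

theorem Finset.factorial_card_le_prod_card_filter_le {α β : Type*} [LinearOrder β]
    (ι : α → β) (A : Finset α) :
    (#A)! ≤ ∏ v ∈ A, #{w ∈ A | ι v ≤ ι w} := by
  classical
  induction A using Finset.strongInduction with
  | H A ih =>
  obtain rfl | hA := A.eq_empty_or_nonempty
  · simp
  obtain ⟨v₀, hv₀, hmin⟩ := A.exists_min_image ι hA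
  calc (#A)! = #A * (#(A.erase v₀))! := by rw [← card_erase_add_one hv₀, Nat.factorial_succ]
    _ ≤ #A * ∏ v ∈ A.erase v₀, #{w ∈ A.erase v₀ | ι v ≤ ι w} := by
      gcongr; exact ih _ (erase_ssubset hv₀)
    _ ≤ #A * ∏ v ∈ A.erase v₀, #{w ∈ A | ι v ≤ ι w} := by
      gcongr; exact erase_subset _ _
    _ = ∏ v ∈ A, #{w ∈ A | ι v ≤ ι w} := by
      rw [← mul_prod_erase A _ hv₀, filter_true_of_mem fun w hw => hmin w hw]

theorem mul_log_sub_le_log_factorial (m : ℕ) : m * log m - m ≤ log m ! := by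
  rcases eq_or_ne m 0 with rfl | hm
  · simp
  have h2π : (1 : ℝ) ≤ 2 * π := by linarith [pi_gt_three]
  linarith [Stirling.le_log_factorial_stirling hm, log_natCast_nonneg m, log_nonneg h2π]

theorem mul_logb_sub_le_logb_factorial {b : ℝ} (hb : 1 < b) (m : ℕ) :
    m * logb b m - m * logb b (exp 1) ≤ logb b m ! := by
  have hlogb : 0 < log b := log_pos hb
  simp only [logb, log_exp]
  rw [mul_div_assoc', mul_one_div, ← sub_div]
  exact div_le_div_of_nonneg_right (mul_log_sub_le_log_factorial m) hlogb.le

section Entropy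

variable {ι κ : Type*}

theorem sum_mul_logb_le_of_prod_factorial_le {b : ℝ} (hb : 1 < b) {s : Finset ι}
    {t : Finset κ} {c : ι → ℕ} {d : κ → ℕ} (h : ∏ j ∈ t, (d j)! ≤ ∏ i ∈ s, c i ^ c i) :
    ∑ j ∈ t, d j * logb b (d j) ≤
      ∑ i ∈ s, c i * logb b (c i) + (∑ j ∈ t, (d j : ℝ)) * logb b (exp 1) := by
  rw [← sub_le_iff_le_add]
  calc ∑ j ∈ t, d j * logb b (d j) - (∑ j ∈ t, (d j : ℝ)) * logb b (exp 1)
      ≤ ∑ j ∈ t, logb b (d j)! := by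
        rw [sum_mul, ← sum_sub_distrib]
        exact sum_le_sum fun j _ => mul_logb_sub_le_logb_factorial hb (d j)
    _ = logb b (∏ j ∈ t, (d j)! : ℕ) := by
        push_cast
        exact (logb_prod _ _ fun j _ => by positivity).symm
    _ ≤ logb b (∏ i ∈ s, c i ^ c i : ℕ) :=
        logb_le_logb_of_le hb (by positivity) (by exact_mod_cast h)
    _ = ∑ i ∈ s, c i * logb b (c i) := by
        push_cast
        rw [logb_prod _ _ fun i _ => by exact_mod_cast Nat.pow_self_pos.ne']
        simp only [logb_pow]

theorem neg_sum_div_mul_logb_div (b : ℝ) {s : Finset ι} {c : ι → ℕ} {n : ℕ}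
    (hc : ∑ i ∈ s, c i = n) :
    -∑ i ∈ s, (c i / n : ℝ) * logb b (c i / n) =
      logb b n - (∑ i ∈ s, c i * logb b (c i)) / n := by
  rcases eq_or_ne n 0 with rfl | hn
  · simp
  have hterm : ∀ i, (c i / n : ℝ) * logb b (c i / n) =
      c i * logb b (c i) / n - c i / n * logb b n := by
    intro i
    rcases eq_or_ne (c i) 0 with hci | hci
    · simp [hci]
    rw [logb_div (by exact_mod_cast hci) (by exact_mod_cast hn)]
    ring
  have hsum : ∑ i ∈ s, (c i / n : ℝ) = 1 := by
    rw [← sum_div, div_eq_one_iff_eq (by exact_mod_cast hn)]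
    exact_mod_cast hc
  rw [sum_congr rfl fun i _ => hterm i, sum_sub_distrib, ← sum_div, ← sum_mul, hsum]
  ring

theorem neg_sum_div_mul_logb_div_le_add_logb_exp {b : ℝ} (hb : 1 < b) {s : Finset ι}
    {t : Finset κ} {c : ι → ℕ} {d : κ → ℕ} {n : ℕ} (hc : ∑ i ∈ s, c i = n)
    (hd : ∑ j ∈ t, d j = n) (h : ∏ j ∈ t, (d j)! ≤ ∏ i ∈ s, c i ^ c i) :
    -∑ i ∈ s, (c i / n : ℝ) * logb b (c i / n) ≤
      -∑ j ∈ t, (d j / n : ℝ) * logb b (d j / n) + logb b (exp 1) := by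
  have hcount := sum_mul_logb_le_of_prod_factorial_le hb h
  rw [show ∑ j ∈ t, (d j : ℝ) = n by exact_mod_cast hd] at hcount
  rw [neg_sum_div_mul_logb_div b hc, neg_sum_div_mul_logb_div b hd]
  have : (∑ j ∈ t, d j * logb b (d j) - ∑ i ∈ s, c i * logb b (c i)) / n ≤ logb b (exp 1) :=
    div_le_of_le_mul₀ n.cast_nonneg (logb_nonneg hb (one_le_exp zero_le_one)) (by linarith)
  rw [sub_div] at this
  linarith

end Entropy

section Greedy

variable {V κ β : Type*}

theorem mem_iff_eq_of_pairwise_disjoint {S : κ → Finset V}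
    (hdisj : Pairwise (Function.onFun Disjoint S)) {ι : V → κ} (hι : ∀ v, v ∈ S (ι v))
    {v : V} {i : κ} : v ∈ S i ↔ ι v = i := by
  refine ⟨fun hv => ?_, fun h => h ▸ hι v⟩
  by_contra hne
  exact disjoint_left.mp (hdisj hne) (hι v) hv

theorem sdiff_biUnion_Iio_eq_filter [DecidableEq V] [LinearOrder β] [LocallyFiniteOrderBot β]
    {S : β → Finset V} {ι : V → β} (hS : ∀ v i, v ∈ S i ↔ ι v = i) (T : Finset V) (i : β) :
    T \ (Iio i).biUnion S = {w ∈ T | i ≤ ι w} := by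
  ext w
  simp [hS]

theorem prod_factorial_card_fiber_le_prod_pow [Fintype V] [DecidableEq κ] [Fintype β]
    [LinearOrder β] {f : V → κ} {t : Finset κ} (hf : ∀ v, f v ∈ t) (ι : V → β) (c : β → ℕ)
    (h : ∀ v, #{w | f w = f v ∧ ι v ≤ ι w} ≤ c (ι v)) :
    ∏ T ∈ t, (#{v | f v = T})! ≤ ∏ i, c i ^ #{v | ι v = i} :=
  calc ∏ T ∈ t, (#{v | f v = T})!
      ≤ ∏ T ∈ t, ∏ v ∈ {v | f v = T}, #{w ∈ {v | f v = T} | ι v ≤ ι w} :=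
        prod_le_prod' fun T _ => factorial_card_le_prod_card_filter_le ι _
    _ ≤ ∏ T ∈ t, ∏ v ∈ {v | f v = T}, c (ι v) := by
        refine prod_le_prod' fun T _ => prod_le_prod' fun v hv => ?_
        rw [(mem_filter.mp hv).2.symm, filter_filter]
        exact h v
    _ = ∏ v, c (ι v) := prod_fiberwise_of_maps_to (fun v _ => hf v) _
    _ = ∏ i, c i ^ #{v | ι v = i} := by
        rw [← prod_fiberwise' univ ι]
        simp only [prod_const]

end Greedy

end

theorem stmt_5_general {V : Type*} [Fintype V] [DecidableEq V]
    (n : ℕ) (hn : n = Fintype.card V)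
    (𝒮 : Finset (Finset V))
    (l : ℕ) (S : Fin l → Finset V)
    (hdisj : ∀ i j, i ≠ j → Disjoint (S i) (S j))
    (hpart : ∀ v : V, ∃ i, v ∈ S i)
    (hgreedy : ∀ i : Fin l, ∀ T ∈ 𝒮,
      (T \ (Finset.Iio i).biUnion (fun j => S j)).card ≤ (S i).card)
    (g : ℝ)
    (hg : g = -∑ i : Fin l, (((S i).card : ℝ) / n) * Real.logb 2 (((S i).card : ℝ) / n))
    (φ : V → Finset V) (hφ : ∀ v, φ v ∈ 𝒮 ∧ v ∈ φ v) :
    g ≤ (-∑ T ∈ 𝒮, (((Finset.univ.filter (fun v => φ v = T)).card : ℝ) / n) *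
          Real.logb 2 (((Finset.univ.filter (fun v => φ v = T)).card : ℝ) / n))
        + Real.logb 2 (Real.exp 1) := by
  choose ι hι using hpart
  have hS : ∀ v i, v ∈ S i ↔ ι v = i := fun v i =>
    mem_iff_eq_of_pairwise_disjoint (fun i j => hdisj i j) hι
  have hS_eq : ∀ i, S i = ({v | ι v = i} : Finset V) := fun i => by ext v; simp [hS]
  have hsumS : ∑ i, #(S i) = n := by
    simp_rw [hS_eq, hn]
    exact (card_eq_sum_card_fiberwise fun v _ => mem_univ (ι v)).symm
  have hsumφ : ∑ T ∈ 𝒮, #{v | φ v = T} = n :=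
    hn ▸ (card_eq_sum_card_fiberwise fun v _ => (hφ v).1).symm
  have hcount : ∏ T ∈ 𝒮, (#{v | φ v = T}).factorial ≤ ∏ i, #(S i) ^ #(S i) := by
    conv_rhs => enter [2, i, 2]; rw [hS_eq]
    refine prod_factorial_card_fiber_le_prod_pow (fun v => (hφ v).1) ι _ fun v => ?_
    refine le_trans (card_le_card fun w hw => ?_) (hgreedy (ι v) (φ v) (hφ v).1)
    obtain ⟨hφw, hle⟩ := (mem_filter.mp hw).2
    rw [sdiff_biUnion_Iio_eq_filter hS, mem_filter, ← hφw]
    exact ⟨(hφ w).2, hle⟩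
  rw [hg]
  exact neg_sum_div_mul_logb_div_le_add_logb_exp one_lt_two hsumS hsumφ hcount

/-- The greedy algorithm for minimum entropy set cover has entropy at most
`OPT + log₂ e`. The sets `S i` are the sets of newly covered elements in the
successive greedy iterations, and `φ` ranges over all feasible assignments. -/
theorem stmt_5 {V : Type*} [Fintype V] [DecidableEq V] [Nonempty V]
    (n : ℕ) (hn : n = Fintype.card V)
    (𝒮 : Finset (Finset V)) (hcover : ∀ v : V, ∃ T ∈ 𝒮, v ∈ T)
    (l : ℕ) (S : Fin l → Finset V)
    (hS : ∀ i, ∃ T ∈ 𝒮, S i ⊆ T)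
    (hdisj : ∀ i j, i ≠ j → Disjoint (S i) (S j))
    (hpart : ∀ v : V, ∃ i, v ∈ S i)
    (hgreedy : ∀ i : Fin l, ∀ T ∈ 𝒮,
      (T \ (Finset.Iio i).biUnion (fun j => S j)).card ≤ (S i).card)
    (g : ℝ)
    (hg : g = -∑ i : Fin l, (((S i).card : ℝ) / n) * Real.logb 2 (((S i).card : ℝ) / n))
    (φ : V → Finset V) (hφ : ∀ v, φ v ∈ 𝒮 ∧ v ∈ φ v) :
    g ≤ (-∑ T ∈ 𝒮, (((Finset.univ.filter (fun v => φ v = T)).card : ℝ) / n) *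
          Real.logb 2 (((Finset.univ.filter (fun v => φ v = T)).card : ℝ) / n))
        + Real.logb 2 (Real.exp 1) :=
  stmt_5_general n hn 𝒮 l S hdisj hpart hgreedy g hg φ hφ
end

section
/- Let G be a graph with n vertices, m ≥ n edges, and maximum degree Δ, and fix a biased orientation of G with indegrees ρ(v). Let v_1, ..., v_s be vertices sampled independently and uniformly at random, and set H := log m − (n/(sm)) Σ_{i=1}^s ρ(v_i) log ρ(v_i). If s ≥ c·(Δ log Δ)²/ε² for a suitable absolute constant c, then with probability at least 2/3, OPT(G) ≤ H + ε and H ≤ OPT(G) + 1 + ε. -/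
/-!
Let `ρ` be the indegrees of the biased orientation. For any orientation `ρ'`, every edge points
in `ρ'` to an endpoint of degree at most the one it points to in `ρ`, so
`∑ ρ' log ρ' ≤ ∑ ρ' log deg ≤ ∑ ρ log deg`; and the tangent bound `log y ≤ y - 1` at
`y = deg / 2ρ` gives `∑ ρ log (deg / ρ) ≤ m` because `∑ deg = 2m = 2 ∑ ρ`. Hence the entropy
`E` of `ρ` satisfies `OPT ≤ E ≤ OPT + 1`.

Writing `E = log m - (n/m) · avg_V (ρ log ρ)`, the difference `H - E` is `n/m ≤ 1` times the
difference between the averages of `ρ log ρ` over `V` and over the sample. The summands lie in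
`[0, Δ log Δ]`, so by Popoviciu's bound on the variance and Chebyshev's inequality, with
`s ≥ (Δ log Δ)² / ε²` samples that difference is below `ε` with probability at least `3/4`.
-/

open scoped BigOperators ENNReal

open Real Finset MeasureTheory ProbabilityTheory

lemma mul_logb_le_mul_logb_add {x d : ℝ} (hx : 0 ≤ x) (hxd : x ≤ d) :
    x * logb 2 d ≤ x * logb 2 x + x + (d / 2 - x) / log 2 := by
  have hlog2 : 0 < log 2 := log_pos one_lt_two
  rcases hx.eq_or_lt with rfl | hx
  · simp only [zero_mul, add_zero, zero_add, sub_zero]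
    positivity
  have hd : 0 < d := hx.trans_le hxd
  -- `log y ≤ y - 1` at `y = d / (2x)`
  have htangent : x * log (d / (2 * x)) ≤ d / 2 - x := by
    have hxy : x * (d / (2 * x)) = d / 2 := by field_simp
    nlinarith [mul_le_mul_of_nonneg_left (log_le_sub_one_of_pos (by positivity : 0 < d / (2 * x)))
      hx.le]
  rw [log_div hd.ne' (by positivity), log_mul two_ne_zero hx.ne'] at htangent
  have hdiff : x * logb 2 x + x + (d / 2 - x) / log 2 - x * logb 2 d
      = (d / 2 - x - x * (log d - (log 2 + log x))) / log 2 := by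
    rw [logb, logb]
    field_simp
    ring
  rw [← sub_nonneg, hdiff]
  exact div_nonneg (by linarith) hlog2.le

lemma natCast_mul_logb_mem_Icc {k Δ : ℕ} (hk : k ≤ Δ) :
    (k : ℝ) * logb 2 k ∈ Set.Icc 0 ((Δ : ℝ) * logb 2 Δ) := by
  have hlogb (j : ℕ) : 0 ≤ logb 2 (j : ℝ) :=
    div_nonneg (log_natCast_nonneg j) (log_nonneg one_le_two)
  rcases k.eq_zero_or_pos with rfl | hk0
  · simpa using mul_nonneg (Nat.cast_nonneg Δ) (hlogb Δ)
  have hkΔ : (k : ℝ) ≤ Δ := by exact_mod_cast hk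
  exact ⟨mul_nonneg k.cast_nonneg (hlogb k), mul_le_mul hkΔ
    (logb_le_logb_of_le one_lt_two (by exact_mod_cast hk0) hkΔ) (hlogb k) (Nat.cast_nonneg Δ)⟩

lemma neg_sum_div_mul_logb_div_s9 {ι : Type*} [Fintype ι] (r : ι → ℕ) {m : ℕ} (hm : 0 < m)
    (hsum : ∑ i, r i = m) :
    -∑ i, ((r i : ℝ) / m) * logb 2 ((r i : ℝ) / m)
      = logb 2 m - (∑ i, (r i : ℝ) * logb 2 (r i)) / m := by
  have hm' : (m : ℝ) ≠ 0 := by positivity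
  have hterm : ∀ i, ((r i : ℝ) / m) * logb 2 ((r i : ℝ) / m)
      = (r i : ℝ) * logb 2 (r i) / m - logb 2 m * ((r i : ℝ) / m) := by
    intro i
    rcases (r i).eq_zero_or_pos with h | h
    · simp [h]
    · rw [logb_div (by positivity) hm']
      field_simp
  have hsumR : ∑ i, (r i : ℝ) = m := by exact_mod_cast hsum
  rw [sum_congr rfl fun i _ => hterm i, sum_sub_distrib, ← sum_div, ← mul_sum, ← sum_div,
    hsumR, div_self hm']
  ring

lemma abs_div_sub_div_mul_mul_le (S T s : ℝ) {n m : ℝ} (hn : 0 < n) (hnm : n ≤ m) :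
    |S / m - n / (s * m) * T| ≤ |T / s - S / n| := by
  have hm : 0 < m := hn.trans_le hnm
  have hT : n / (s * m) * T = n / m * (T / s) := by
    rw [div_mul_eq_mul_div, div_mul_div_comm, mul_comm m s]
  have hS : S / m = n / m * (S / n) := by
    rw [div_mul_div_comm, mul_comm n S, mul_div_mul_right _ _ hn.ne']
  rw [hT, hS, ← mul_sub, abs_mul, abs_sub_comm, abs_of_pos (div_pos hn hm)]
  exact mul_le_of_le_one_left (abs_nonneg _) ((div_le_one hm).2 hnm)

namespace SimpleGraph

variable {V : Type*} [Fintype V] (G : SimpleGraph V) [DecidableRel G.Adj]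

-- An orientation is encoded by the head `f e ∈ e` of each edge, and `indegree G f` is `ρ`.
def IsOrientation (f : Sym2 V → V) : Prop := ∀ e ∈ G.edgeFinset, f e ∈ e

def IsBiasedOrientation (f : Sym2 V → V) : Prop :=
  ∀ v w, G.Adj v w → G.degree w < G.degree v → f s(v, w) = v

section

variable {G}

lemma IsBiasedOrientation.degree_eq_max {f : Sym2 V → V} (hbias : G.IsBiasedOrientation f)
    (hf : G.IsOrientation f) {a b : V} (hab : G.Adj a b) :
    G.degree (f s(a, b)) = max (G.degree a) (G.degree b) := by
  rcases lt_trichotomy (G.degree a) (G.degree b) with h | h | h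
  · rw [Sym2.eq_swap, hbias b a hab.symm h, max_eq_right h.le]
  · rw [← h, max_self]
    rcases Sym2.mem_iff.1 (hf _ (mem_edgeFinset.2 hab)) with h' | h' <;> rw [h', h]
  · rw [hbias a b hab h, max_eq_left h.le]

lemma IsBiasedOrientation.degree_le_degree {f f' : Sym2 V → V} (hbias : G.IsBiasedOrientation f)
    (hf : G.IsOrientation f) (hf' : G.IsOrientation f') {e : Sym2 V} (he : e ∈ G.edgeFinset) :
    G.degree (f' e) ≤ G.degree (f e) := by
  induction e using Sym2.inductionOn with
  | hf a b =>
    rw [hbias.degree_eq_max hf (mem_edgeFinset.1 he)]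
    rcases Sym2.mem_iff.1 (hf' _ he) with h | h <;> rw [h]
    exacts [le_max_left _ _, le_max_right _ _]

lemma two_le_of_card_le_card_edgeFinset [Nonempty V] (hnm : Fintype.card V ≤ #G.edgeFinset)
    {Δ : ℕ} (hΔ : ∀ v, G.degree v ≤ Δ) : 2 ≤ Δ := by
  have hdeg : 2 * #G.edgeFinset ≤ Fintype.card V * Δ := by
    simpa [← G.sum_degrees_eq_twice_card_edges] using sum_le_sum fun v (_ : v ∈ univ) => hΔ v
  have hn : 0 < Fintype.card V := Fintype.card_pos
  nlinarith

end

variable [DecidableEq V]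

def indegree (f : Sym2 V → V) (v : V) : ℕ := #{e ∈ G.edgeFinset | f e = v}

noncomputable def orientationEntropy (f : Sym2 V → V) : ℝ :=
  -∑ v, ((G.indegree f v : ℝ) / #G.edgeFinset) * logb 2 ((G.indegree f v : ℝ) / #G.edgeFinset)

-- The estimator `H` on a sample `ω` of `s` vertices.
noncomputable def entropyEstimator (f : Sym2 V → V) {s : ℕ} (ω : Fin s → V) : ℝ :=
  logb 2 #G.edgeFinset - (Fintype.card V / (s * #G.edgeFinset)) *
    ∑ i, (G.indegree f (ω i) : ℝ) * logb 2 (G.indegree f (ω i))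

lemma sum_indegree (f : Sym2 V → V) : ∑ v, G.indegree f v = #G.edgeFinset :=
  (card_eq_sum_card_fiberwise fun e _ => mem_univ (f e)).symm

lemma sum_indegree_mul (f : Sym2 V → V) (F : V → ℝ) :
    ∑ v, (G.indegree f v : ℝ) * F v = ∑ e ∈ G.edgeFinset, F (f e) := by
  rw [← sum_fiberwise_of_maps_to (fun e _ => mem_univ (f e)) (fun e => F (f e))]
  refine sum_congr rfl fun v _ => ?_
  rw [sum_congr rfl fun e he => by rw [(mem_filter.1 he).2], sum_const, nsmul_eq_mul]
  rfl

lemma orientationEntropy_eq (f : Sym2 V → V) (hm : 0 < #G.edgeFinset) :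
    G.orientationEntropy f = logb 2 #G.edgeFinset
      - (∑ v, (G.indegree f v : ℝ) * logb 2 (G.indegree f v)) / #G.edgeFinset :=
  neg_sum_div_mul_logb_div_s9 _ hm (G.sum_indegree f)

variable {G}

lemma IsOrientation.indegree_le_degree {f : Sym2 V → V} (hf : G.IsOrientation f) (v : V) :
    G.indegree f v ≤ G.degree v := by
  rw [← card_incidenceFinset_eq_degree]
  refine card_le_card fun e he => ?_
  rw [mem_filter] at he
  exact (G.mem_incidenceFinset v e).2 ⟨mem_edgeFinset.1 he.1, he.2 ▸ hf e he.1⟩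

lemma IsOrientation.degree_pos {f : Sym2 V → V} (hf : G.IsOrientation f) {e : Sym2 V}
    (he : e ∈ G.edgeFinset) : 0 < G.degree (f e) :=
  (card_pos.2 ⟨e, mem_filter.2 ⟨he, rfl⟩⟩ : 0 < G.indegree f (f e)).trans_le
    (hf.indegree_le_degree (f e))

lemma IsBiasedOrientation.sum_mul_logb_indegree_le {f f' : Sym2 V → V}
    (hbias : G.IsBiasedOrientation f) (hf : G.IsOrientation f) (hf' : G.IsOrientation f') :
    ∑ v, (G.indegree f' v : ℝ) * logb 2 (G.indegree f' v)
      ≤ ∑ v, (G.indegree f v : ℝ) * logb 2 (G.indegree f v) + #G.edgeFinset := by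
  have hlogb_mono {x y : ℕ} (hx : 0 < x) (hxy : x ≤ y) : logb 2 (x : ℝ) ≤ logb 2 y :=
    logb_le_logb_of_le one_lt_two (by exact_mod_cast hx) (by exact_mod_cast hxy)
  have hdeg : ∑ v, (G.degree v : ℝ) = 2 * #G.edgeFinset := by
    exact_mod_cast G.sum_degrees_eq_twice_card_edges
  have hin : ∑ v, (G.indegree f v : ℝ) = #G.edgeFinset := by exact_mod_cast G.sum_indegree f
  calc ∑ v, (G.indegree f' v : ℝ) * logb 2 (G.indegree f' v)
      ≤ ∑ v, (G.indegree f' v : ℝ) * logb 2 (G.degree v) := by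
        refine sum_le_sum fun v _ => ?_
        rcases (G.indegree f' v).eq_zero_or_pos with h | h
        · simp [h]
        · exact mul_le_mul_of_nonneg_left (hlogb_mono h (hf'.indegree_le_degree v))
            (Nat.cast_nonneg _)
    _ = ∑ e ∈ G.edgeFinset, logb 2 (G.degree (f' e)) := G.sum_indegree_mul f' _
    _ ≤ ∑ e ∈ G.edgeFinset, logb 2 (G.degree (f e)) :=
        sum_le_sum fun e he => hlogb_mono (hf'.degree_pos he) (hbias.degree_le_degree hf hf' he)
    _ = ∑ v, (G.indegree f v : ℝ) * logb 2 (G.degree v) :=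
        (G.sum_indegree_mul f fun v => logb 2 (G.degree v)).symm
    _ ≤ ∑ v, ((G.indegree f v : ℝ) * logb 2 (G.indegree f v) + G.indegree f v
          + (G.degree v / 2 - G.indegree f v) / log 2) :=
        sum_le_sum fun v _ => mul_logb_le_mul_logb_add (Nat.cast_nonneg _)
          (by exact_mod_cast hf.indegree_le_degree v)
    _ = _ := by
        simp only [sum_add_distrib, ← sum_div, sum_sub_distrib, hdeg, hin]
        ring

lemma IsBiasedOrientation.orientationEntropy_le_add_one {f f' : Sym2 V → V}
    (hbias : G.IsBiasedOrientation f) (hf : G.IsOrientation f) (hf' : G.IsOrientation f') :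
    G.orientationEntropy f ≤ G.orientationEntropy f' + 1 := by
  rcases (#G.edgeFinset).eq_zero_or_pos with hm | hm
  · simp [orientationEntropy, hm]
  have hm' : (0 : ℝ) < #G.edgeFinset := by exact_mod_cast hm
  rw [G.orientationEntropy_eq f hm, G.orientationEntropy_eq f' hm]
  have := div_le_div_of_nonneg_right (hbias.sum_mul_logb_indegree_le hf hf') hm'.le
  rw [add_div, div_self hm'.ne'] at this
  linarith

lemma abs_entropyEstimator_sub_orientationEntropy_le [Nonempty V]
    (hnm : Fintype.card V ≤ #G.edgeFinset) (f : Sym2 V → V) {s : ℕ} (ω : Fin s → V) :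
    |G.entropyEstimator f ω - G.orientationEntropy f|
      ≤ |(∑ i, (G.indegree f (ω i) : ℝ) * logb 2 (G.indegree f (ω i))) / s
          - (∑ v, (G.indegree f v : ℝ) * logb 2 (G.indegree f v)) / Fintype.card V| := by
  have hn : (0 : ℝ) < Fintype.card V := by exact_mod_cast Fintype.card_pos
  have hnm' : (Fintype.card V : ℝ) ≤ #G.edgeFinset := by exact_mod_cast hnm
  rw [entropyEstimator, G.orientationEntropy_eq f (Fintype.card_pos.trans_le hnm),
    sub_sub_sub_cancel_left]
  exact abs_div_sub_div_mul_mul_le _ _ _ hn hnm'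

end SimpleGraph

lemma meas_abs_sampleMean_sub_integral_ge_le {Ω : Type*} [MeasurableSpace Ω] (μ : Measure Ω)
    [IsProbabilityMeasure μ] {g : Ω → ℝ} (hg : Measurable g) {a b : ℝ}
    (hgab : ∀ x, g x ∈ Set.Icc a b) {s : ℕ} (hs : 0 < s) {δ : ℝ} (hδ : 0 < δ) :
    Measure.pi (fun _ : Fin s => μ) {ω | δ ≤ |(∑ i, g (ω i)) / s - ∫ x, g x ∂μ|}
      ≤ ENNReal.ofReal (((b - a) / 2) ^ 2 / (s * δ ^ 2)) := by
  set T : (Fin s → Ω) → ℝ := ∑ i, fun ω => g (ω i) with hT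
  have hTapply (ω : Fin s → Ω) : T ω = ∑ i, g (ω i) := by rw [hT, Finset.sum_apply]
  have hs' : (0 : ℝ) < s := by exact_mod_cast hs
  have hgL2 : MemLp g 2 μ := memLp_of_bounded (ae_of_all _ hgab) hg.aestronglyMeasurable 2
  have hTL2 : MemLp T 2 (Measure.pi fun _ => μ) :=
    memLp_finsetSum' _ fun i _ => hgL2.comp_measurePreserving (measurePreserving_eval _ i)
  have hET : ∫ ω, T ω ∂(Measure.pi fun _ => μ) = s * ∫ x, g x ∂μ := by
    simp_rw [hTapply]
    have hint (i : Fin s) :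
        Integrable (fun ω : Fin s → Ω => g (ω i)) (Measure.pi fun _ => μ) :=
      (hgL2.comp_measurePreserving (measurePreserving_eval _ i)).integrable one_le_two
    rw [integral_finsetSum univ fun i _ => hint i]
    rw [sum_congr rfl fun i _ => integral_comp_eval (μ := fun _ : Fin s => μ) (i := i)
      hg.aestronglyMeasurable, sum_const, card_univ, Fintype.card_fin, nsmul_eq_mul]
  have hVarT : Var[T; Measure.pi fun _ => μ] ≤ s * ((b - a) / 2) ^ 2 := by
    rw [hT, variance_sum_pi fun _ => hgL2]
    simpa using sum_le_sum (s := univ) fun (i : Fin s) _ =>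
      variance_le_sq_of_bounded (ae_of_all μ hgab) hg.aemeasurable
  have hevent : {ω : Fin s → Ω | δ ≤ |(∑ i, g (ω i)) / s - ∫ x, g x ∂μ|}
      = {ω | s * δ ≤ |T ω - ∫ ω, T ω ∂(Measure.pi fun _ => μ)|} := by
    ext ω
    rw [Set.mem_ofPred_eq, Set.mem_ofPred_eq, hET, hTapply, ← mul_le_mul_iff_of_pos_left hs',
      ← abs_of_pos hs', ← abs_mul, abs_of_pos hs', mul_sub, mul_div_cancel₀ _ hs'.ne']
  calc _ = _ := congrArg _ hevent
    _ ≤ ENNReal.ofReal (Var[T; Measure.pi fun _ => μ] / (s * δ) ^ 2) :=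
        meas_ge_le_variance_div_sq hTL2 (by positivity)
    _ ≤ ENNReal.ofReal (((b - a) / 2) ^ 2 / (s * δ ^ 2)) := by
        refine ENNReal.ofReal_le_ofReal ?_
        rw [div_le_div_iff₀ (by positivity) (by positivity)]
        nlinarith [mul_le_mul_of_nonneg_right hVarT (by positivity : (0 : ℝ) ≤ s * δ ^ 2)]

lemma integral_uniformOfFintype {V : Type*} [Fintype V] [Nonempty V] [MeasurableSpace V]
    [MeasurableSingletonClass V] (g : V → ℝ) :
    ∫ v, g v ∂(PMF.uniformOfFintype V).toMeasure = (∑ v, g v) / Fintype.card V := by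
  rw [PMF.integral_eq_sum, sum_div]
  simp [PMF.uniformOfFintype_apply, div_eq_inv_mul]

lemma three_quarters_le_measure_abs_sampleMean_sub_lt {V : Type*} [Fintype V] [Nonempty V]
    [MeasurableSpace V] [MeasurableSingletonClass V] {g : V → ℝ} {b : ℝ}
    (hg : ∀ v, g v ∈ Set.Icc 0 b) (hb : 0 < b) {ε : ℝ} (hε : 0 < ε) {s : ℕ}
    (hs : b ^ 2 ≤ s * ε ^ 2) :
    3 / 4 ≤ Measure.pi (fun _ : Fin s => (PMF.uniformOfFintype V).toMeasure)
      {ω | |(∑ i, g (ω i)) / s - (∑ v, g v) / Fintype.card V| < ε} := by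
  have hs0 : 0 < s := by
    exact_mod_cast pos_of_mul_pos_left ((pow_pos hb 2).trans_le hs) (sq_nonneg ε)
  have hbad := meas_abs_sampleMean_sub_integral_ge_le (PMF.uniformOfFintype V).toMeasure
    (measurable_of_countable g) hg hs0 hε
  rw [integral_uniformOfFintype, sub_zero] at hbad
  have hquarter : (b / 2) ^ 2 / (s * ε ^ 2) ≤ 1 / 4 := by
    rw [div_le_iff₀ (by positivity)]
    nlinarith
  have hevent : {ω : Fin s → V | |(∑ i, g (ω i)) / s - (∑ v, g v) / Fintype.card V| < ε}
      = {ω | ε ≤ |(∑ i, g (ω i)) / s - (∑ v, g v) / Fintype.card V|}ᶜ := by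
    ext ω
    simp only [Set.mem_compl_iff, Set.mem_ofPred_eq, not_le]
  rw [hevent, prob_compl_eq_one_sub (Set.toFinite _).measurableSet]
  calc (3 : ℝ≥0∞) / 4 = 1 - ENNReal.ofReal (1 / 4) := by
        rw [← ENNReal.ofReal_one, ← ENNReal.ofReal_sub _ (by norm_num),
          show (1 : ℝ) - 1 / 4 = 3 / 4 by norm_num, ENNReal.ofReal_div_of_pos (by norm_num)]
        norm_num
    _ ≤ _ := tsub_le_tsub_left (hbad.trans (ENNReal.ofReal_le_ofReal hquarter)) 1

/-- Constant-time approximation of the minimum orientation entropy: there is an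
absolute constant `c` such that for any graph with `n ≤ m` edges and maximum
degree `Δ`, sampling `s ≥ c (Δ log Δ)²/ε²` vertices uniformly and independently
and forming `H := log m − (n/(sm)) ∑ᵢ ρ(vᵢ) log ρ(vᵢ)` from the indegrees `ρ` of
a fixed biased orientation gives, with probability at least `2/3`,
`OPT ≤ H + ε` and `H ≤ OPT + 1 + ε`. -/
theorem stmt_9 :
    ∃ c : ℝ, 0 < c ∧
      ∀ (V : Type) [Fintype V] [DecidableEq V] [Nonempty V]
        [MeasurableSpace V] [MeasurableSingletonClass V]
        (G : SimpleGraph V) [DecidableRel G.Adj]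
        (n m Δ : ℕ),
        n = Fintype.card V → m = G.edgeFinset.card → n ≤ m →
        (∀ v, G.degree v ≤ Δ) →
        ∀ f : Sym2 V → V, (∀ e ∈ G.edgeFinset, f e ∈ e) →
        (∀ v w, G.Adj v w → G.degree w < G.degree v → f s(v, w) = v) →
        ∀ OPT : ℝ,
          IsLeast {h : ℝ | ∃ f' : Sym2 V → V, (∀ e ∈ G.edgeFinset, f' e ∈ e) ∧
            h = -∑ v : V, (((G.edgeFinset.filter (fun e => f' e = v)).card : ℝ) / m) *
              Real.logb 2 (((G.edgeFinset.filter (fun e => f' e = v)).card : ℝ) / m)} OPT →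
        ∀ ε : ℝ, 0 < ε →
        ∀ s : ℕ, c * ((Δ : ℝ) * Real.logb 2 Δ) ^ 2 / ε ^ 2 ≤ s →
        ∀ H : (Fin s → V) → ℝ,
          (H = fun ω => Real.logb 2 m - ((n : ℝ) / (s * m)) *
            ∑ i : Fin s, ((G.edgeFinset.filter (fun e => f e = ω i)).card : ℝ) *
              Real.logb 2 ((G.edgeFinset.filter (fun e => f e = ω i)).card : ℝ)) →
          (2 : ℝ≥0∞) / 3 ≤
            (MeasureTheory.Measure.pi fun _ : Fin s => (PMF.uniformOfFintype V).toMeasure)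
              {ω | OPT ≤ H ω + ε ∧ H ω ≤ OPT + 1 + ε} := by
  refine ⟨1, one_pos, ?_⟩
  intro V _ _ _ _ _ G _ n m Δ hn hm hnm hΔ f hf hbias OPT hOPT ε hε s hs H hH
  subst hn hm hH
  change G.IsOrientation f at hf
  change G.IsBiasedOrientation f at hbias
  change 2 / 3 ≤ Measure.pi (fun _ => (PMF.uniformOfFintype V).toMeasure)
    {ω | OPT ≤ G.entropyEstimator f ω + ε ∧ G.entropyEstimator f ω ≤ OPT + 1 + ε}
  have hOPT_le : OPT ≤ G.orientationEntropy f := hOPT.2 ⟨f, hf, rfl⟩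
  have hle_OPT : G.orientationEntropy f ≤ OPT + 1 := by
    obtain ⟨f', hf', rfl⟩ := hOPT.1
    exact hbias.orientationEntropy_le_add_one hf hf'
  have hΔ2 : (2 : ℝ) ≤ Δ := by exact_mod_cast G.two_le_of_card_le_card_edgeFinset hnm hΔ
  have hb : 0 < (Δ : ℝ) * logb 2 Δ := mul_pos (by linarith) (logb_pos one_lt_two (by linarith))
  rw [one_mul, div_le_iff₀ (by positivity)] at hs
  have hsample := three_quarters_le_measure_abs_sampleMean_sub_lt
    (fun v => natCast_mul_logb_mem_Icc ((hf.indegree_le_degree v).trans (hΔ v))) hb hε hs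
  calc (2 : ℝ≥0∞) / 3 ≤ 3 / 4 := by
        refine ENNReal.div_le_of_le_mul ?_
        rw [← ENNReal.mul_div_right_comm, ENNReal.le_div_iff_mul_le] <;> norm_num
    _ ≤ _ := hsample
    _ ≤ _ := measure_mono fun ω hω => by
        have hdev := abs_lt.1
          ((G.abs_entropyEstimator_sub_orientationEntropy_le hnm f ω).trans_lt hω)
        exact ⟨by linarith, by linarith⟩
end

section
/- Let J_k be the intersection graph of the intervals h_i^j = ((j−1)/i, j/i) for 1 ≤ j ≤ i ≤ k. Then for every proper coloring φ of J_k and every i ∈ {1,...,k}, the sum of the sizes of the i largest color classes of φ is at most k + (k−1) + ... + (k−i+1). -/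
open scoped BigOperators

/-- Vertices of `J k`: the pair `⟨i, j⟩ : (i : Fin k) × Fin (i+1)` represents the
interval `h_{i+1}^{j+1} = (j/(i+1), (j+1)/(i+1))`. -/
abbrev Jvert (k : ℕ) := (i : Fin k) × Fin (i.1 + 1)

/-- The open interval associated with a vertex of `J k`. -/
def Jinterval {k : ℕ} (v : Jvert k) : Set ℝ :=
  Set.Ioo ((v.2 : ℝ) / ((v.1 : ℕ) + 1)) (((v.2 : ℕ) + 1) / ((v.1 : ℕ) + 1))

/-- The intersection graph `J k` of the intervals `h_i^j = ((j-1)/i, j/i)`,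
`1 ≤ j ≤ i ≤ k`. -/
def Jgraph (k : ℕ) : SimpleGraph (Jvert k) where
  Adj a b := a ≠ b ∧ (Jinterval a ∩ Jinterval b).Nonempty
  symm := by
    constructor
    intro a b ⟨h1, h2⟩
    exact ⟨h1.symm, by rwa [Set.inter_comm]⟩
  loopless := by
    constructor
    intro a ⟨h, _⟩
    exact h rfl

/-! Discretize `(0, 1)` into `k!` cells of width `1 / k!`; the interval of a vertex in row `r`
is a union of `k! / r` consecutive cells. Vertices whose intervals share a cell are adjacent, hence
coloured differently, so the union `T` of `i` colour classes covers every cell at most `i` times: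
`∑ 1 / row v ≤ i` over `T`. Writing `d = k - i`, every vertex has
`1 ≤ (row v - d)⁺ / row v + d / row v`; summing over `T` and enlarging the first sum to all of
`J k` (row `r` contributes `(r - d)⁺`) gives `#T ≤ ∑_{r ≤ k} (r - d)⁺ + d i`, which is
`k + (k - 1) + ⋯ + (k - i + 1)`. -/

open Finset

namespace Jvert

variable {k : ℕ}

def row (v : Jvert k) : ℕ := v.1 + 1

def weight (v : Jvert k) : ℕ := k.factorial / v.row

/-- Sample point `m` stands for the midpoint `(2m + 1) / (2 k!)` of the `m`-th cell. -/
def samples (v : Jvert k) : Finset ℕ := Ico (v.2 * v.weight) ((v.2 + 1) * v.weight)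

lemma row_mul_weight (v : Jvert k) : v.row * v.weight = k.factorial :=
  Nat.mul_div_cancel' (Nat.dvd_factorial v.1.1.succ_pos v.1.2)

lemma card_samples (v : Jvert k) : #v.samples = v.weight := by
  rw [samples, Nat.card_Ico, add_mul, one_mul, Nat.add_sub_cancel_left]

lemma samples_subset_range (v : Jvert k) : v.samples ⊆ range k.factorial := fun m hm ↦
  mem_range.2 <| calc
    m < (v.2 + 1) * v.weight := (mem_Ico.1 hm).2
    _ ≤ v.row * v.weight := Nat.mul_le_mul_right _ v.2.2
    _ = k.factorial := v.row_mul_weight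

lemma mem_Jinterval_of_mem_samples {v : Jvert k} {m : ℕ} (hm : m ∈ v.samples) :
    (2 * m + 1 : ℝ) / (2 * k.factorial) ∈ Jinterval v := by
  obtain ⟨hlo, hhi⟩ := mem_Ico.1 hm
  have hN : ((v.1 : ℕ) + 1 : ℝ) * v.weight = k.factorial := by
    exact_mod_cast v.row_mul_weight
  have hlo' : (2 * (v.2 * v.weight) : ℝ) < 2 * m + 1 := by
    exact_mod_cast (by omega : 2 * (v.2 * v.weight) < 2 * m + 1)
  have hhi' : (2 * m + 1 : ℝ) < 2 * ((v.2 + 1) * v.weight) := by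
    exact_mod_cast (by omega : 2 * m + 1 < 2 * ((v.2 + 1) * v.weight))
  have hr : (0 : ℝ) < (v.1 : ℕ) + 1 := by positivity
  have hF : (0 : ℝ) < 2 * k.factorial := by positivity
  constructor
  · rw [div_lt_div_iff₀ hr hF, ← hN]; nlinarith
  · rw [div_lt_div_iff₀ hF hr, ← hN]; nlinarith

lemma sum_row_sub_mul_weight (d : ℕ) :
    ∑ v : Jvert k, (v.row - d) * v.weight = k.factorial * ∑ t ∈ range k, (t + 1 - d) := by
  rw [← univ_sigma_univ, sum_sigma, mul_sum, ← Fin.sum_univ_eq_sum_range]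
  refine sum_congr rfl fun a _ ↦ ?_
  change ∑ _j : Fin (a + 1), (a.1 + 1 - d) * (k.factorial / (a.1 + 1)) = _
  rw [sum_const, card_univ, Fintype.card_fin, smul_eq_mul, mul_left_comm,
    Nat.mul_div_cancel' (Nat.dvd_factorial a.1.succ_pos a.2), mul_comm]

/-- The truncated subtraction `v.row - d` is the `(row v - d)⁺` of the dual bound. -/
theorem card_le_of_sum_weight_le {T : Finset (Jvert k)} {n : ℕ}
    (h : ∑ v ∈ T, v.weight ≤ k.factorial * n) (d : ℕ) :
    #T ≤ ∑ t ∈ range k, (t + 1 - d) + d * n := by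
  refine Nat.le_of_mul_le_mul_left ?_ k.factorial_pos
  calc k.factorial * #T = ∑ v ∈ T, v.row * v.weight := by
        rw [sum_congr rfl fun v _ ↦ v.row_mul_weight, sum_const, smul_eq_mul, mul_comm]
    _ ≤ ∑ v ∈ T, (v.row - d) * v.weight + d * ∑ v ∈ T, v.weight := by
        rw [mul_sum, ← sum_add_distrib]
        exact sum_le_sum fun v _ ↦ by rw [← add_mul]; gcongr; omega
    _ ≤ ∑ v : Jvert k, (v.row - d) * v.weight + d * (k.factorial * n) :=
        add_le_add (sum_le_sum_of_subset (subset_univ T)) (Nat.mul_le_mul_left d h)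
    _ = k.factorial * (∑ t ∈ range k, (t + 1 - d) + d * n) := by
        rw [sum_row_sub_mul_weight]; ring

end Jvert

namespace Jgraph

variable {k : ℕ}

lemma adj_of_mem_samples {v w : Jvert k} (hvw : v ≠ w) {m : ℕ} (hv : m ∈ v.samples)
    (hw : m ∈ w.samples) : (Jgraph k).Adj v w :=
  ⟨hvw, _, Jvert.mem_Jinterval_of_mem_samples hv, Jvert.mem_Jinterval_of_mem_samples hw⟩

theorem sum_weight_le_of_mapsTo {α : Type*} {φ : Jvert k → α}
    (hφ : ∀ a b, (Jgraph k).Adj a b → φ a ≠ φ b) {T : Finset (Jvert k)} {C : Finset α}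
    (hTC : Set.MapsTo φ T C) : ∑ v ∈ T, v.weight ≤ k.factorial * #C := by
  let r : Jvert k → ℕ → Prop := fun v m ↦ m ∈ v.samples
  calc ∑ v ∈ T, v.weight = ∑ v ∈ T, #((range k.factorial).bipartiteAbove r v) := by
        refine sum_congr rfl fun v _ ↦ ?_
        rw [bipartiteAbove, filter_mem_eq_inter, inter_eq_right.2 v.samples_subset_range,
          v.card_samples]
    _ = ∑ m ∈ range k.factorial, #(T.bipartiteBelow r m) :=
        sum_card_bipartiteAbove_eq_sum_card_bipartiteBelow r
    _ ≤ ∑ _m ∈ range k.factorial, #C := by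
        refine sum_le_sum fun m _ ↦ card_le_card_of_injOn φ
          (fun v hv ↦ hTC ((mem_bipartiteBelow r).1 hv).1) fun v hv w hw hφvw ↦ ?_
        by_contra hvw
        exact hφ v w (adj_of_mem_samples hvw ((mem_bipartiteBelow r).1 hv).2
          ((mem_bipartiteBelow r).1 hw).2) hφvw
    _ = k.factorial * #C := by rw [sum_const, card_range, smul_eq_mul]

end Jgraph

lemma sum_range_sub_add_mul (d i : ℕ) :
    ∑ t ∈ range (d + i), (t + 1 - d) + d * i = ∑ t ∈ range i, (d + i - t) := by
  induction i with
  | zero => simpa using sum_eq_zero fun t ht ↦ Nat.sub_eq_zero_of_le (mem_range.1 ht)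
  | succ i ih =>
    rw [← add_assoc, sum_range_succ, sum_range_succ', mul_add_one]
    simp only [Nat.add_sub_add_right, Nat.sub_zero]
    omega

theorem stmt_10_general (k : ℕ) (φ : Jvert k → ℕ)
    (hφ : ∀ a b, (Jgraph k).Adj a b → φ a ≠ φ b)
    (i : ℕ) (hik : i ≤ k)
    (C : Finset ℕ) (hC : C.card = i) :
    ∑ c ∈ C, (Finset.univ.filter (fun v : Jvert k => φ v = c)).card
      ≤ ∑ t ∈ Finset.range i, (k - t) := by
  obtain ⟨d, rfl⟩ : ∃ d, k = d + i := ⟨k - i, by omega⟩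
  rw [sum_card_fiberwise_eq_card_filter, ← sum_range_sub_add_mul]
  refine Jvert.card_le_of_sum_weight_le ?_ d
  calc _ ≤ (d + i).factorial * #C :=
        Jgraph.sum_weight_le_of_mapsTo hφ fun v hv ↦ (mem_filter.1 hv).2
    _ = _ := by rw [hC]

/-- In any proper coloring of `J k`, the total size of any `i` color classes
(in particular, of the `i` largest ones) is at most `k + (k-1) + ⋯ + (k-i+1)`. -/
theorem stmt_10 (k : ℕ) (φ : Jvert k → ℕ)
    (hφ : ∀ a b, (Jgraph k).Adj a b → φ a ≠ φ b)
    (i : ℕ) (hi1 : 1 ≤ i) (hik : i ≤ k)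
    (C : Finset ℕ) (hC : C.card = i) :
    ∑ c ∈ C, (Finset.univ.filter (fun v : Jvert k => φ v = c)).card
      ≤ ∑ t ∈ Finset.range i, (k - t) :=
  stmt_10_general k φ hφ i hik C hC
end

section
/- Let J_k be the interval graph of the intervals h_i^j = ((j−1)/i, j/i), 1 ≤ j ≤ i ≤ k. If a proper coloring of J_k realizes the distribution with class sizes exactly (k, k−1, ..., 2, 1), then each color class is exactly one row of J_k, i.e., each row {h_i^j : 1 ≤ j ≤ i} is monochromatic. -/
/-!
A colour class of a proper colouring of `J k` is a family of pairwise disjoint subintervals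
of `[0, 1]`, so the lengths `1 / i` of its intervals sum to at most `1`. The classes are
identified in order of decreasing size: once the classes of size larger than `m` are known to
be the rows with denominators larger than `m`, the class of size `m` consists of `m` intervals
of length at least `1 / m` each; their lengths sum to at most `1`, so all equal `1 / m`, and the
class is the row with denominator `m`.
-/

open scoped BigOperators

open Finset MeasureTheory

theorem SimpleGraph.isIndepSet_setOf_eq {V α : Type*} {G : SimpleGraph V} {φ : V → α}
    (hφ : ∀ a b, G.Adj a b → φ a ≠ φ b) (x : α) : G.IsIndepSet {v | φ v = x} :=
  fun a ha b hb _ hadj => hφ a b hadj (ha.trans hb.symm)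

namespace Jgraph

variable {k : ℕ}

lemma volume_Jinterval (v : Jvert k) :
    volume (Jinterval v) = ENNReal.ofReal (1 / ((v.1 : ℕ) + 1)) := by
  rw [Jinterval, Real.volume_Ioo, div_sub_div_same]
  ring_nf

lemma Jinterval_subset_Icc (v : Jvert k) : Jinterval v ⊆ Set.Icc 0 1 := by
  refine Set.Ioo_subset_Icc_self.trans (Set.Icc_subset_Icc (by positivity) ?_)
  rw [div_le_one (by positivity)]
  exact_mod_cast v.2.2

lemma pairwiseDisjoint_Jinterval {S : Set (Jvert k)} (hS : (Jgraph k).IsIndepSet S) :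
    S.PairwiseDisjoint Jinterval := fun _ ha _ hb hab =>
  Set.disjoint_iff_inter_eq_empty.mpr <|
    Set.not_nonempty_iff_eq_empty.mp fun hne => hS ha hb hab ⟨hab, hne⟩

lemma sum_inv_le_one_of_isIndepSet {S : Finset (Jvert k)} (hS : (Jgraph k).IsIndepSet S) :
    ∑ v ∈ S, (1 : ℝ) / ((v.1 : ℕ) + 1) ≤ 1 := by
  have hunion : volume (⋃ v ∈ S, Jinterval v) ≤ volume (Set.Icc (0 : ℝ) 1) :=
    measure_mono (Set.iUnion₂_subset fun v _ => Jinterval_subset_Icc v)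
  rw [measure_biUnion_finset (pairwiseDisjoint_Jinterval hS) fun _ _ => measurableSet_Ioo,
    Real.volume_Icc, sub_zero] at hunion
  simp only [volume_Jinterval] at hunion
  rwa [← ENNReal.ofReal_sum_of_nonneg (fun v _ => by positivity),
    ENNReal.ofReal_le_ofReal_iff zero_le_one] at hunion

def row (k n : ℕ) : Finset (Jvert k) := univ.filter fun v => (v.1 : ℕ) = n

lemma card_row {n : ℕ} (hn : n < k) : (row k n).card = n + 1 := by
  have : row k n = univ.map ⟨Sigma.mk (⟨n, hn⟩ : Fin k), sigma_mk_injective⟩ := by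
    ext ⟨i, j⟩
    simp only [row, mem_filter, mem_univ, true_and, mem_map, Function.Embedding.coeFn_mk]
    constructor
    · rintro rfl
      exact ⟨j, rfl⟩
    · rintro ⟨j, h⟩
      exact (congrArg (fun v : Jvert k => (v.1 : ℕ)) h).symm
  rw [this, card_map, card_univ, Fintype.card_fin]

lemma eq_row_of_isIndepSet {S : Finset (Jvert k)} (hS : (Jgraph k).IsIndepSet S) {n : ℕ}
    (hn : n < k) (hcard : S.card = n + 1) (hle : ∀ v ∈ S, (v.1 : ℕ) ≤ n) : S = row k n := by
  have hrow : ∀ v ∈ S, (v.1 : ℕ) = n := by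
    by_contra! ⟨v₀, hv₀, hne⟩
    have hlt : (v₀.1 : ℕ) + 1 < n + 1 := by have := hle v₀ hv₀; omega
    have : (1 : ℝ) < ∑ v ∈ S, (1 : ℝ) / ((v.1 : ℕ) + 1) := calc
      (1 : ℝ) = ∑ _v ∈ S, (1 : ℝ) / (n + 1) := by
        rw [sum_const, hcard, nsmul_eq_mul]; push_cast; field_simp
      _ < ∑ v ∈ S, (1 : ℝ) / ((v.1 : ℕ) + 1) := by
        refine sum_lt_sum (fun v hv => ?_) ⟨v₀, hv₀, ?_⟩
        · exact one_div_le_one_div_of_le (by positivity)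
            (by exact_mod_cast Nat.succ_le_succ (hle v hv))
        · exact one_div_lt_one_div_of_lt (by positivity) (by exact_mod_cast hlt)
    linarith [sum_inv_le_one_of_isIndepSet hS]
  exact eq_of_subset_of_card_le (fun v hv => mem_filter.mpr ⟨mem_univ v, hrow v hv⟩)
    (by rw [card_row hn, hcard])

variable {φ : Jvert k → ℕ} {c : Fin k → ℕ}

theorem filter_eq_row (hφ : ∀ a b, (Jgraph k).Adj a b → φ a ≠ φ b)
    (hcinj : Function.Injective c)
    (hsize : ∀ t : Fin k, (univ.filter fun v : Jvert k => φ v = c t).card = k - t)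
    (t : Fin k) : univ.filter (fun v => φ v = c t) = row k (k - 1 - t) := by
  induction t using WellFoundedLT.induction with
  | _ t ih =>
  have hindep : (Jgraph k).IsIndepSet (univ.filter fun v => φ v = c t : Finset (Jvert k)) := by
    rw [coe_filter_univ]
    exact SimpleGraph.isIndepSet_setOf_eq hφ (c t)
  refine eq_row_of_isIndepSet hindep (by omega) (by rw [hsize]; omega) fun v hv => ?_
  by_contra! hgt
  let s : Fin k := ⟨k - 1 - v.1, by omega⟩
  have hst : s < t := Fin.lt_def.mpr (show k - 1 - (v.1 : ℕ) < t by omega)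
  have hvs : v ∈ univ.filter fun v => φ v = c s := by
    rw [ih s hst]
    simp only [row, mem_filter, mem_univ, true_and, s]
    omega
  exact hst.ne (hcinj ((mem_filter.mp hvs).2.symm.trans (mem_filter.mp hv).2))

end Jgraph

/-- If a proper coloring of `J k` realizes the size distribution
`(k, k-1, …, 2, 1)`, then each color class is exactly one row of `J k`;
in particular each row is monochromatic. -/
theorem stmt_11 (k : ℕ) (φ : Jvert k → ℕ)
    (hφ : ∀ a b, (Jgraph k).Adj a b → φ a ≠ φ b)
    (c : Fin k → ℕ) (hcinj : Function.Injective c)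
    (hsize : ∀ t : Fin k,
      (Finset.univ.filter (fun v : Jvert k => φ v = c t)).card = k - t)
    (hused : ∀ v : Jvert k, ∃ t, φ v = c t) :
    ∀ (i : Fin k) (j j' : Fin (i.1 + 1)), φ ⟨i, j⟩ = φ ⟨i, j'⟩ := by
  intro i j j'
  obtain ⟨t, ht⟩ := hused ⟨i, j⟩
  have hrow := Jgraph.filter_eq_row hφ hcinj hsize t
  have hij : (⟨i, j⟩ : Jvert k) ∈ Jgraph.row k (k - 1 - t) :=
    hrow ▸ mem_filter.mpr ⟨mem_univ _, ht⟩
  have hij' : (⟨i, j'⟩ : Jvert k) ∈ univ.filter fun v => φ v = c t :=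
    hrow ▸ mem_filter.mpr ⟨mem_univ _, (mem_filter.mp hij).2⟩
  rw [ht, (mem_filter.mp hij').2]
end

section
/- Let G be a graph on n vertices and let S_1, S_2, ..., S_k be a sequence of disjoint independent sets partitioning V(G) such that for every t ≤ k, S_1 ∪ ... ∪ S_t induces a maximum t-colorable subgraph of G (i.e., has the maximum number of vertices among all subsets of V that can be properly t-colored). Then the entropy of the distribution (|S_1|/n, ..., |S_k|/n) is a lower bound on the entropy of every proper coloring of G. -/
/-!
Sort the colour classes of `ψ` by decreasing size `q₁ ≥ q₂ ≥ ⋯ ≥ q_m`. The union of the `t`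
largest classes is `t`-colourable, so by maximality it has at most `|S₁| + ⋯ + |S_t|` vertices:
the partial sums of `(|S_i|)` dominate those of `(q_j)`. For a nonincreasing positive `q`
dominated by `p` with the same total, the tangent lines of the concave `x ↦ -x log x` give
`H(p) ≤ H(q) + ∑ⱼ (-log qⱼ - 1)(pⱼ - qⱼ)`, and the last sum is `≤ 0` by Abel summation: the
slopes `-log qⱼ - 1` increase with `j` while the partial sums of `p - q` are nonnegative and
add up to `0`.
-/

open Finset Real

theorem sum_range_mul_nonpos_of_monotoneOn {c d : ℕ → ℝ} {N : ℕ}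
    (hc : MonotoneOn c (Set.Iio N)) (hd : ∀ t ≤ N, 0 ≤ ∑ j ∈ range t, d j)
    (hd_sum : ∑ j ∈ range N, d j = 0) : ∑ j ∈ range N, c j * d j ≤ 0 := by
  simp only [← smul_eq_mul (a := c _)]
  rw [sum_range_by_parts, hd_sum, smul_zero, zero_sub, neg_nonpos]
  refine sum_nonneg fun i hi => smul_nonneg ?_ (hd _ (by grind))
  exact sub_nonneg.2 (hc (by grind) (by grind) (by omega))

theorem Real.negMulLog_le_add_mul_sub {p q : ℝ} (hp : 0 ≤ p) (hq : 0 < q) :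
    negMulLog p ≤ negMulLog q + (-log q - 1) * (p - q) := by
  have hmul := negMulLog_mul q (p / q)
  rw [mul_div_cancel₀ _ hq.ne'] at hmul
  calc negMulLog p ≤ p / q * negMulLog q + q * (1 - p / q) := by
        rw [hmul]; gcongr; exact negMulLog_le_one_sub_self (by positivity)
    _ = negMulLog q + (-log q - 1) * (p - q) := by
        simp only [negMulLog]; field_simp; ring

theorem sum_negMulLog_le_of_sum_range_le_of_pos {p q : ℕ → ℝ} {N : ℕ}
    (hp : ∀ j < N, 0 ≤ p j) (hq : ∀ j < N, 0 < q j) (hq_anti : AntitoneOn q (Set.Iio N))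
    (hdom : ∀ t ≤ N, ∑ j ∈ range t, q j ≤ ∑ j ∈ range t, p j)
    (hsum : ∑ j ∈ range N, p j = ∑ j ∈ range N, q j) :
    ∑ j ∈ range N, negMulLog (p j) ≤ ∑ j ∈ range N, negMulLog (q j) := by
  have habel : ∑ j ∈ range N, (-log (q j) - 1) * (p j - q j) ≤ 0 := by
    refine sum_range_mul_nonpos_of_monotoneOn (fun i hi j hj hij => ?_) (fun t ht => ?_) ?_
    · have := log_le_log (hq j hj) (hq_anti hi hj hij)
      linarith
    · rw [sum_sub_distrib, sub_nonneg]; exact hdom t ht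
    · rw [sum_sub_distrib, hsum, sub_self]
  calc ∑ j ∈ range N, negMulLog (p j)
      ≤ ∑ j ∈ range N, (negMulLog (q j) + (-log (q j) - 1) * (p j - q j)) :=
        sum_le_sum fun j hj =>
          negMulLog_le_add_mul_sub (hp j (mem_range.1 hj)) (hq j (mem_range.1 hj))
    _ ≤ ∑ j ∈ range N, negMulLog (q j) := by rw [sum_add_distrib]; linarith

theorem sum_negMulLog_le_of_sum_range_le {p q : ℕ → ℝ} {m N : ℕ} (hmN : m ≤ N)
    (hp : ∀ j, 0 ≤ p j) (hq : ∀ j < m, 0 < q j) (hq_anti : AntitoneOn q (Set.Iio m))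
    (hdom : ∀ t ≤ m, ∑ j ∈ range t, q j ≤ ∑ j ∈ range t, p j)
    (hsum : ∑ j ∈ range N, p j = ∑ j ∈ range m, q j) :
    ∑ j ∈ range N, negMulLog (p j) ≤ ∑ j ∈ range m, negMulLog (q j) := by
  have hsub : range m ⊆ range N := range_subset_range.2 hmN
  -- domination at `t = m` leaves no mass of `p` outside `range m`
  have hpm : ∑ j ∈ range m, p j = ∑ j ∈ range N, p j :=
    le_antisymm (sum_le_sum_of_subset_of_nonneg hsub fun j _ _ => hp j)
      (hsum ▸ hdom m le_rfl)
  have htail : ∀ j ∈ range N, j ∉ range m → negMulLog (p j) = 0 := by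
    intro j hjN hjm
    have h0 : ∑ i ∈ range N \ range m, p i = 0 := by rw [sum_sdiff_eq_sub hsub, hpm, sub_self]
    rw [(sum_eq_zero_iff_of_nonneg fun i _ => hp i).1 h0 j (mem_sdiff.2 ⟨hjN, hjm⟩),
      negMulLog_zero]
  rw [← sum_subset hsub htail]
  exact sum_negMulLog_le_of_sum_range_le_of_pos (fun j _ => hp j) hq hq_anti hdom
    (hpm.trans hsum)

theorem sum_filter_val_lt_eq_sum_range {M : Type*} [AddCommMonoid M] {k : ℕ} {F : ℕ → M}
    (hF : ∀ j, k ≤ j → F j = 0) (t : ℕ) :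
    ∑ i ∈ univ.filter (fun i : Fin k => (i : ℕ) < t), F i = ∑ j ∈ range t, F j := by
  have hmap : (univ.filter (fun i : Fin k => (i : ℕ) < t)).map Fin.valEmbedding =
      (range t).filter (· < k) := by
    ext j; simp only [mem_map, mem_filter, mem_univ, true_and, mem_range, Fin.valEmbedding_apply]
    exact ⟨by rintro ⟨i, hi, rfl⟩; exact ⟨hi, i.2⟩, fun ⟨hj, hjk⟩ => ⟨⟨j, hjk⟩, hj, rfl⟩⟩
  rw [← sum_filter_of_ne (p := (· < k)) fun j _ hj => not_le.1 (mt (hF j) hj), ← hmap, sum_map]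
  rfl

theorem sum_filter_val_lt_comp_eq_sum_range_extend {M : Type*} [AddCommMonoid M] {k : ℕ}
    (p : Fin k → ℝ) {g : ℝ → M} (hg : g 0 = 0) (t : ℕ) :
    ∑ i ∈ univ.filter (fun i : Fin k => (i : ℕ) < t), g (p i) =
      ∑ j ∈ range t, g (Function.extend Fin.val p 0 j) := by
  rw [← sum_filter_val_lt_eq_sum_range fun j hj => ?_]
  · exact sum_congr rfl fun i _ => by rw [Fin.val_injective.extend_apply]
  · rw [Function.extend_apply' _ _ _ fun ⟨i, hi⟩ => (hi ▸ i.2.not_ge) hj, Pi.zero_apply, hg]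

theorem sum_comp_eq_sum_range_extend {M : Type*} [AddCommMonoid M] {k N : ℕ}
    (p : Fin k → ℝ) {g : ℝ → M} (hg : g 0 = 0) (hkN : k ≤ N) :
    ∑ i, g (p i) = ∑ j ∈ range N, g (Function.extend Fin.val p 0 j) := by
  rw [← sum_filter_val_lt_comp_eq_sum_range_extend p hg,
    filter_true_of_mem fun i _ => i.2.trans_le hkN]

theorem sum_negMulLog_le_of_sum_filter_lt_le {k m : ℕ} {p : Fin k → ℝ} {q : Fin m → ℝ}
    (hp : ∀ i, 0 ≤ p i) (hq : ∀ j, 0 < q j) (hq_anti : Antitone q)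
    (hdom : ∀ t ≤ k, ∑ j ∈ univ.filter (fun j : Fin m => (j : ℕ) < t), q j ≤
      ∑ i ∈ univ.filter (fun i : Fin k => (i : ℕ) < t), p i)
    (hsum : ∑ i, p i = ∑ j, q j) :
    ∑ i, negMulLog (p i) ≤ ∑ j, negMulLog (q j) := by
  set P := Function.extend Fin.val p 0
  set Q := Function.extend Fin.val q 0
  have hP : ∀ j, 0 ≤ P j := fun j => by
    by_cases hj : ∃ i : Fin k, ↑i = j
    · obtain ⟨i, rfl⟩ := hj
      exact (Fin.val_injective.extend_apply p 0 i).ge.trans' (hp i)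
    · exact (Function.extend_apply' p (0 : ℕ → ℝ) j hj).ge
  have hQ : ∀ j (hj : j < m), Q j = q ⟨j, hj⟩ := fun j hj =>
    Fin.val_injective.extend_apply q 0 ⟨j, hj⟩
  have hp_part : ∀ t,
      ∑ i ∈ univ.filter (fun i : Fin k => (i : ℕ) < t), p i = ∑ j ∈ range t, P j :=
    sum_filter_val_lt_comp_eq_sum_range_extend p (g := id) rfl
  have hq_part : ∀ t,
      ∑ j ∈ univ.filter (fun j : Fin m => (j : ℕ) < t), q j = ∑ j ∈ range t, Q j :=
    sum_filter_val_lt_comp_eq_sum_range_extend q (g := id) rfl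
  have hp_sum : ∀ t, k ≤ t → ∑ i, p i = ∑ j ∈ range t, P j :=
    fun t => sum_comp_eq_sum_range_extend p (g := id) rfl
  have hq_sum : ∑ j, q j = ∑ j ∈ range m, Q j :=
    sum_comp_eq_sum_range_extend q (g := id) rfl le_rfl
  rw [sum_comp_eq_sum_range_extend p negMulLog_zero (k.le_add_right m),
    sum_comp_eq_sum_range_extend q negMulLog_zero le_rfl]
  refine sum_negMulLog_le_of_sum_range_le (p := P) (q := Q) (m.le_add_left k) hP
    (fun j hj => by rw [hQ j hj]; exact hq _) (fun i hi j hj hij => ?_) (fun t ht => ?_)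
    (by rw [← hp_sum _ (k.le_add_right m), hsum, hq_sum])
  · rw [hQ i hi, hQ j hj]
    exact hq_anti hij
  · rcases le_or_gt t k with htk | hkt
    · rw [← hp_part, ← hq_part]
      exact hdom t htk
    · calc ∑ j ∈ range t, Q j ≤ ∑ j ∈ range m, Q j :=
            sum_le_sum_of_subset_of_nonneg (range_subset_range.2 ht) fun j hj _ => by
              rw [hQ j (mem_range.1 hj)]; exact (hq _).le
        _ = ∑ j ∈ range t, P j := by rw [← hq_sum, ← hsum, hp_sum t hkt.le]

theorem neg_sum_mul_logb_eq {ι : Type*} (s : Finset ι) (x : ι → ℝ) (b : ℝ) :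
    -∑ i ∈ s, x i * logb b (x i) = (∑ i ∈ s, negMulLog (x i)) / log b := by
  rw [sum_div, ← sum_neg_distrib]
  exact sum_congr rfl fun i _ => by simp only [negMulLog, logb]; ring

theorem exists_equiv_fin_antitone {α β : Type*} [Fintype α] [LinearOrder β] (f : α → β) :
    ∃ e : Fin (Fintype.card α) ≃ α, Antitone (f ∘ e) := by
  let e₀ := (Fintype.equivFin α).symm
  refine ⟨Fin.revPerm.trans ((Tuple.sort (f ∘ e₀)).trans e₀), fun i j hij => ?_⟩
  exact Tuple.monotone_sort (f ∘ e₀) (Fin.rev_le_rev.2 hij)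

namespace SimpleGraph

theorem exists_fin_coloring_on_preimage {V α : Type*} {G : SimpleGraph V} {ψ : V → α}
    (hψ : ∀ a b, G.Adj a b → ψ a ≠ ψ b) {T : Finset α} {t : ℕ} (hT : #T ≤ t) (ht : 0 < t) :
    ∃ c : V → Fin t, ∀ a b, ψ a ∈ T → ψ b ∈ T → G.Adj a b → c a ≠ c b := by
  classical
  obtain ⟨ι⟩ := Function.Embedding.nonempty_of_card_le (α := T) (β := Fin t) (by simpa using hT)
  refine ⟨fun v => if h : ψ v ∈ T then ι ⟨ψ v, h⟩ else ⟨0, ht⟩,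
    fun a b ha hb hab hc => hψ a b hab ?_⟩
  simp only [dif_pos ha, dif_pos hb] at hc
  exact congrArg Subtype.val (ι.injective hc)

theorem sum_card_fiber_le_of_colorable_le {V α : Type*} [Fintype V] [DecidableEq α]
    {G : SimpleGraph V} {ψ : V → α} (hψ : ∀ a b, G.Adj a b → ψ a ≠ ψ b) {T : Finset α}
    {t M : ℕ} (hT : #T ≤ t)
    (hmax : ∀ W : Finset V, (∃ c : V → Fin t, ∀ a ∈ W, ∀ b ∈ W, G.Adj a b → c a ≠ c b) →
      #W ≤ M) :
    ∑ c ∈ T, #{v | ψ v = c} ≤ M := by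
  rcases t.eq_zero_or_pos with rfl | ht
  · simp [card_eq_zero.1 (Nat.le_zero.1 hT)]
  obtain ⟨c, hc⟩ := exists_fin_coloring_on_preimage hψ hT ht
  rw [sum_card_fiberwise_eq_card_filter]
  exact hmax _ ⟨c, fun a ha b hb => hc a b (mem_filter.1 ha).2 (mem_filter.1 hb).2⟩

end SimpleGraph

theorem stmt_15_general {V : Type*} [Fintype V] [Nonempty V]
    (G : SimpleGraph V) (n : ℕ) (hn : n = Fintype.card V)
    (k : ℕ) (S : Fin k → Finset V)
    (hdisj : ∀ i j, i ≠ j → Disjoint (S i) (S j))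
    (hpart : ∀ v : V, ∃ i, v ∈ S i)
    (hmax : ∀ t : ℕ, t ≤ k → ∀ W : Finset V,
      (∃ c : V → Fin t, ∀ a ∈ W, ∀ b ∈ W, G.Adj a b → c a ≠ c b) →
      W.card ≤ ∑ i ∈ Finset.univ.filter (fun i : Fin k => (i : ℕ) < t), (S i).card)
    (ψ : V → ℕ) (hψ : ∀ a b, G.Adj a b → ψ a ≠ ψ b) :
    -∑ i : Fin k, (((S i).card : ℝ) / n) * Real.logb 2 (((S i).card : ℝ) / n)
      ≤ -∑ c ∈ Finset.univ.image ψ,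
          (((Finset.univ.filter (fun v => ψ v = c)).card : ℝ) / n) *
            Real.logb 2 (((Finset.univ.filter (fun v => ψ v = c)).card : ℝ) / n) := by
  classical
  have hn0 : (0 : ℝ) < n := by rw [hn]; exact_mod_cast Fintype.card_pos
  obtain ⟨e, he⟩ := exists_equiv_fin_antitone fun c : univ.image ψ => #{v | ψ v = c}
  have hreindex : ∀ f : ℕ → ℝ, ∑ j, f (e j) = ∑ c ∈ univ.image ψ, f c := fun f =>
    (e.sum_comp fun c => f c).trans (sum_coe_sort _ f)
  have hS : ∑ i, (#(S i) : ℝ) = n := by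
    have hcover : univ.biUnion S = univ :=
      eq_univ_of_forall fun v => mem_biUnion.2 ((hpart v).imp fun i hi => ⟨mem_univ i, hi⟩)
    rw [← Nat.cast_sum, ← card_biUnion fun i _ j _ hij => hdisj i j hij, hcover, card_univ, hn]
  have hQ : ∑ j, (#{v | ψ v = e j} : ℝ) = n := by
    rw [hreindex fun c => (#{v | ψ v = c} : ℝ), ← Nat.cast_sum, ← card_eq_sum_card_image,
      card_univ, hn]
  have hQ_pos : ∀ j, 0 < #{v | ψ v = e j} := fun j => by
    obtain ⟨v, -, hv⟩ := mem_image.1 (e j).2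
    exact card_pos.2 ⟨v, mem_filter.2 ⟨mem_univ v, hv⟩⟩
  have hdom : ∀ t ≤ k, ∑ j ∈ univ.filter (fun j : Fin _ => (j : ℕ) < t), #{v | ψ v = e j} ≤
      ∑ i ∈ univ.filter (fun i : Fin k => (i : ℕ) < t), #(S i) := fun t ht => by
    have := SimpleGraph.sum_card_fiber_le_of_colorable_le hψ
      (T := (univ.filter (fun j : Fin _ => (j : ℕ) < t)).image fun j => (e j : ℕ))
      (card_image_le.trans (Fin.card_filter_val_lt.trans_le (min_le_right _ _))) (hmax t ht)
    rwa [sum_image fun i _ j _ h => e.injective (Subtype.ext h)] at this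
  rw [neg_sum_mul_logb_eq, neg_sum_mul_logb_eq, ← hreindex]
  gcongr
  exact sum_negMulLog_le_of_sum_filter_lt_le (fun i => by positivity)
    (fun j => div_pos (by exact_mod_cast hQ_pos j) hn0)
    (fun i j hij => div_le_div_of_nonneg_right (by exact_mod_cast he hij) hn0.le)
    (fun t ht => by simpa only [← sum_div, ← Nat.cast_sum] using
      div_le_div_of_nonneg_right (by exact_mod_cast hdom t ht) hn0.le)
    (by simp only [← sum_div, hS, hQ])

/-- If disjoint independent sets `S 0, …, S (k-1)` partition `V(G)` such that for
every `t ≤ k` the first `t` sets induce a maximum `t`-colorable subgraph, then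
the entropy of the distribution `(|S i|/n)` is a lower bound on the entropy of
every proper coloring of `G`. -/
theorem stmt_15 {V : Type*} [Fintype V] [DecidableEq V] [Nonempty V]
    (G : SimpleGraph V) (n : ℕ) (hn : n = Fintype.card V)
    (k : ℕ) (S : Fin k → Finset V)
    (hdisj : ∀ i j, i ≠ j → Disjoint (S i) (S j))
    (hpart : ∀ v : V, ∃ i, v ∈ S i)
    (hind : ∀ i, ∀ a ∈ S i, ∀ b ∈ S i, ¬G.Adj a b)
    (hmax : ∀ t : ℕ, t ≤ k → ∀ W : Finset V,
      (∃ c : V → Fin t, ∀ a ∈ W, ∀ b ∈ W, G.Adj a b → c a ≠ c b) →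
      W.card ≤ ∑ i ∈ Finset.univ.filter (fun i : Fin k => (i : ℕ) < t), (S i).card)
    (ψ : V → ℕ) (hψ : ∀ a b, G.Adj a b → ψ a ≠ ψ b) :
    -∑ i : Fin k, (((S i).card : ℝ) / n) * Real.logb 2 (((S i).card : ℝ) / n)
      ≤ -∑ c ∈ Finset.univ.image ψ,
          (((Finset.univ.filter (fun v => ψ v = c)).card : ℝ) / n) *
            Real.logb 2 (((Finset.univ.filter (fun v => ψ v = c)).card : ℝ) / n) :=
  stmt_15_general G n hn k S hdisj hpart hmax ψ hψ
end

section
/- Suppose a graph G admits a partition of its vertex set into disjoint independent sets S_1, ..., S_k such that (a) the distribution (|S_i|/n) has entropy H' that is a lower bound on the minimum coloring entropy of G, and (b) each S_i induces a bipartite graph. Then G admits a proper coloring with entropy at most OPT + 1, where OPT is the minimum entropy of a proper coloring of G. -/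
/-! Two-color each bipartite part `S i` by `B i`; then `v ↦ (i, B i v)` for `v ∈ S i` is a proper
coloring. Splitting a class of frequency `p = x + y` into classes of frequencies `x` and `y`
raises `-p log₂ p` by at most `p`, by convexity of `t ↦ t log t` at the midpoint `p / 2`.
Summed over the classes, the entropy grows by at most `∑ p ≤ 1` bit, giving `H' + 1 ≤ OPT + 1`. -/

open Finset Real

theorem add_mul_logb_two_le {x y : ℝ} (hx : 0 ≤ x) (hy : 0 ≤ y) :
    (x + y) * logb 2 (x + y) ≤ x * logb 2 x + y * logb 2 y + (x + y) := by
  rcases (add_nonneg hx hy).eq_or_lt with hxy | hxy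
  · obtain ⟨rfl, rfl⟩ : x = 0 ∧ y = 0 := ⟨by linarith, by linarith⟩
    simp
  have hmid := convexOn_mul_log.2 (Set.mem_Ici.2 hx) (Set.mem_Ici.2 hy)
    (by norm_num : (0 : ℝ) ≤ 1 / 2) (by norm_num : (0 : ℝ) ≤ 1 / 2) (by norm_num)
  have hlog : log (1 / 2 * x + 1 / 2 * y) = log (x + y) - log 2 := by
    rw [← log_div hxy.ne' two_ne_zero]; ring_nf
  simp only [smul_eq_mul, hlog] at hmid
  have hnats : (x + y) * log (x + y) ≤ x * log x + y * log y + (x + y) * log 2 := by linarith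
  have hlog2 : 0 < log 2 := log_pos one_lt_two
  calc (x + y) * logb 2 (x + y) = (x + y) * log (x + y) / log 2 := mul_div_assoc' ..
    _ ≤ (x * log x + y * log y + (x + y) * log 2) / log 2 := by gcongr
    _ = x * logb 2 x + y * logb 2 y + (x + y) := by simp only [logb]; field_simp

section

variable {V α β : Type*} [Fintype V] [DecidableEq α] [DecidableEq β]

noncomputable def classFreq (φ : V → α) (c : α) : ℝ :=
  (#{v | φ v = c} : ℝ) / Fintype.card V

noncomputable def coloringEntropy (φ : V → α) : ℝ :=
  -∑ c ∈ univ.image φ, classFreq φ c * logb 2 (classFreq φ c)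

theorem coloringEntropy_eq_sum_of_mapsTo (φ : V → α) {s : Finset α} (hs : ∀ v, φ v ∈ s) :
    coloringEntropy φ = -∑ c ∈ s, classFreq φ c * logb 2 (classFreq φ c) := by
  rw [coloringEntropy, sum_subset (image_subset_iff.2 fun v _ => hs v)]
  intro c _ hc
  have : #{v | φ v = c} = 0 := card_eq_zero.2 <| filter_eq_empty_iff.2 fun v _ hv =>
    hc (hv ▸ mem_image_of_mem φ (mem_univ v))
  simp [classFreq, this]

theorem coloringEntropy_comp_of_injective (φ : V → α) {e : α → β} (he : Function.Injective e) :
    coloringEntropy (e ∘ φ) = coloringEntropy φ := by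
  have hfreq : ∀ c, classFreq (e ∘ φ) (e c) = classFreq φ c := by
    intro c
    simp only [classFreq, Function.comp_apply, he.eq_iff]
  rw [coloringEntropy_eq_sum_of_mapsTo (e ∘ φ) (s := (univ.image φ).image e)
    (fun v => mem_image_of_mem e (mem_image_of_mem φ (mem_univ v))),
    sum_image fun _ _ _ _ h => he h, coloringEntropy]
  simp only [hfreq]

theorem classFreq_prodMk_false_add_true (φ : V → α) (b : V → Bool) (c : α) :
    classFreq (fun v => (φ v, b v)) (c, false) + classFreq (fun v => (φ v, b v)) (c, true)
      = classFreq φ c := by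
  simp only [classFreq, ← add_div, ← Nat.cast_add]
  rw [← card_filter_add_card_filter_not (s := {v | φ v = c}) (p := fun v => b v = false),
    filter_filter, filter_filter]
  simp [Prod.ext_iff]

theorem sum_classFreq_le_one (φ : V → α) : ∑ c ∈ univ.image φ, classFreq φ c ≤ 1 := by
  simp only [classFreq, ← sum_div]
  rw [← Nat.cast_sum, ← card_eq_sum_card_image, card_univ]
  exact div_self_le_one _

theorem coloringEntropy_prodMk_le (φ : V → α) (b : V → Bool) :
    coloringEntropy (fun v => (φ v, b v)) ≤ coloringEntropy φ + 1 := by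
  have hsplit : ∀ c ∈ univ.image φ,
      classFreq φ c * logb 2 (classFreq φ c) - classFreq φ c ≤
        ∑ x : Bool, classFreq (fun v => (φ v, b v)) (c, x) *
          logb 2 (classFreq (fun v => (φ v, b v)) (c, x)) := by
    intro c _
    rw [Fintype.sum_bool, ← classFreq_prodMk_false_add_true φ b c]
    have h := add_mul_logb_two_le (x := classFreq (fun v => (φ v, b v)) (c, false))
      (y := classFreq (fun v => (φ v, b v)) (c, true))
      (by unfold classFreq; positivity) (by unfold classFreq; positivity)
    linarith
  rw [coloringEntropy_eq_sum_of_mapsTo _ (s := univ.image φ ×ˢ univ)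
    (fun v => mem_product.2 ⟨mem_image_of_mem φ (mem_univ v), mem_univ _⟩), sum_product,
    coloringEntropy]
  have := sum_le_sum hsplit
  rw [sum_sub_distrib] at this
  linarith [sum_classFreq_le_one φ]

theorem coloringEntropy_eq_of_mem_partition {ι : Type*} [Fintype ι] [DecidableEq ι]
    (S : ι → Finset V) (hdisj : ∀ i j, i ≠ j → Disjoint (S i) (S j)) {f : V → ι}
    (hf : ∀ v, v ∈ S (f v)) :
    coloringEntropy f =
      -∑ i, ((#(S i) : ℝ) / Fintype.card V) * logb 2 ((#(S i) : ℝ) / Fintype.card V) := by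
  have hclass : ∀ i, ({v | f v = i} : Finset V) = S i := by
    intro i
    ext v
    simp only [mem_filter, mem_univ, true_and]
    refine ⟨fun h => h ▸ hf v, fun hv => ?_⟩
    by_contra hne
    exact disjoint_left.1 (hdisj _ _ hne) (hf v) hv
  simp only [coloringEntropy_eq_sum_of_mapsTo f (s := univ) (fun v => mem_univ _), classFreq,
    hclass]

end

theorem stmt_16_general {V : Type*} [Fintype V]
    (G : SimpleGraph V) (n : ℕ) (hn : n = Fintype.card V)
    (k : ℕ) (S : Fin k → Finset V)
    (hdisj : ∀ i j, i ≠ j → Disjoint (S i) (S j))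
    (hpart : ∀ v : V, ∃ i, v ∈ S i)
    (H' : ℝ)
    (hH' : H' = -∑ i : Fin k, (((S i).card : ℝ) / n) * Real.logb 2 (((S i).card : ℝ) / n))
    (hlb : ∀ ψ : V → ℕ, (∀ a b, G.Adj a b → ψ a ≠ ψ b) →
      H' ≤ -∑ c ∈ Finset.univ.image ψ,
        (((Finset.univ.filter (fun v => ψ v = c)).card : ℝ) / n) *
          Real.logb 2 (((Finset.univ.filter (fun v => ψ v = c)).card : ℝ) / n))
    (hbip : ∀ i, ∃ b : V → Bool, ∀ a ∈ S i, ∀ a' ∈ S i, G.Adj a a' → b a ≠ b a') :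
    ∃ φ : V → ℕ, (∀ a b, G.Adj a b → φ a ≠ φ b) ∧
      ∀ ψ : V → ℕ, (∀ a b, G.Adj a b → ψ a ≠ ψ b) →
        -∑ c ∈ Finset.univ.image φ,
            (((Finset.univ.filter (fun v => φ v = c)).card : ℝ) / n) *
              Real.logb 2 (((Finset.univ.filter (fun v => φ v = c)).card : ℝ) / n)
          ≤ (-∑ c ∈ Finset.univ.image ψ,
              (((Finset.univ.filter (fun v => ψ v = c)).card : ℝ) / n) *
                Real.logb 2 (((Finset.univ.filter (fun v => ψ v = c)).card : ℝ) / n)) + 1 := by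
  subst hn
  choose f hf using hpart
  choose B hB using hbip
  let χ : V → Fin k × Bool := fun v => (f v, B (f v) v)
  have hχ : ∀ a b, G.Adj a b → χ a ≠ χ b := by
    intro a b hab hχab
    obtain ⟨hfab, hBab⟩ := Prod.mk.inj hχab
    exact hB (f a) a (hf a) b (hfab ▸ hf b) hab (hfab ▸ hBab)
  refine ⟨Encodable.encode ∘ χ, fun a b hab h => hχ a b hab (Encodable.encode_injective h),
    fun ψ hψ => ?_⟩
  calc coloringEntropy (Encodable.encode ∘ χ)
      = coloringEntropy χ := coloringEntropy_comp_of_injective χ Encodable.encode_injective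
    _ ≤ coloringEntropy f + 1 := coloringEntropy_prodMk_le f _
    _ = H' + 1 := by rw [coloringEntropy_eq_of_mem_partition S hdisj hf, hH']
    _ ≤ coloringEntropy ψ + 1 := by gcongr; exact hlb ψ hψ

/-- If `G` admits a partition of its vertex set into disjoint sets `S i` such
that (a) the entropy `H'` of the distribution `(|S i|/n)` is a lower bound on the
minimum coloring entropy of `G`, and (b) each `S i` induces a bipartite graph,
then `G` admits a proper coloring with entropy at most `OPT + 1`. -/
theorem stmt_16 {V : Type*} [Fintype V] [DecidableEq V] [Nonempty V]
    (G : SimpleGraph V) (n : ℕ) (hn : n = Fintype.card V)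
    (k : ℕ) (S : Fin k → Finset V)
    (hdisj : ∀ i j, i ≠ j → Disjoint (S i) (S j))
    (hpart : ∀ v : V, ∃ i, v ∈ S i)
    (H' : ℝ)
    (hH' : H' = -∑ i : Fin k, (((S i).card : ℝ) / n) * Real.logb 2 (((S i).card : ℝ) / n))
    (hlb : ∀ ψ : V → ℕ, (∀ a b, G.Adj a b → ψ a ≠ ψ b) →
      H' ≤ -∑ c ∈ Finset.univ.image ψ,
        (((Finset.univ.filter (fun v => ψ v = c)).card : ℝ) / n) *
          Real.logb 2 (((Finset.univ.filter (fun v => ψ v = c)).card : ℝ) / n))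
    (hbip : ∀ i, ∃ b : V → Bool, ∀ a ∈ S i, ∀ a' ∈ S i, G.Adj a a' → b a ≠ b a') :
    ∃ φ : V → ℕ, (∀ a b, G.Adj a b → φ a ≠ φ b) ∧
      ∀ ψ : V → ℕ, (∀ a b, G.Adj a b → ψ a ≠ ψ b) →
        -∑ c ∈ Finset.univ.image φ,
            (((Finset.univ.filter (fun v => φ v = c)).card : ℝ) / n) *
              Real.logb 2 (((Finset.univ.filter (fun v => φ v = c)).card : ℝ) / n)
          ≤ (-∑ c ∈ Finset.univ.image ψ,
              (((Finset.univ.filter (fun v => ψ v = c)).card : ℝ) / n) *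
                Real.logb 2 (((Finset.univ.filter (fun v => ψ v = c)).card : ℝ) / n)) + 1 :=
  stmt_16_general G n hn k S hdisj hpart H' hH' hlb hbip
end
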